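/- arXiv:2003.11254 — 10 statements merged into one kernel-verified Lean document; each statement's English description precedes it below -/
import Mathlib

section
/- Let X be a real normed linear space with continuous dual X*, let C ⊆ X be a nonempty set, and let x* ∈ X* be nonzero. Then the following two conditions are equivalent: (i) for every M > 0 there exists N > 0 such that for all r ≥ N and all c ∈ C with ⟨x*, c⟩ ≥ r one has ‖c‖/r > M; (ii) for every ε > 0 there exists K > 0 such that for all c ∈ C with ‖c‖ ≥ K one has ⟨x*, c⟩/‖c‖ < ε. -/
/-!
For (i) ⇒ (ii), apply (i) with `M = 1 / ε` at the level `r = f c`: once `f c ≥ ε ‖c‖` and `‖c‖` is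
large, `f c` itself is a large admissible level, and (i) then forces `f c < ε ‖c‖`.
For (ii) ⇒ (i), apply (ii) with `ε = 1 / M`; points of `C` outside the ball of radius `K` satisfy
`f c < ‖c‖ / M`, while those inside it have `f c` bounded, so they never reach a large level `r`.
-/

section

variable {E : Type*} [Norm E] (C : Set E) (f : E → ℝ)

theorem forall_div_norm_lt_of_forall_lt_norm_div
    (h : ∀ M > (0 : ℝ), ∃ N > (0 : ℝ), ∀ r ≥ N, ∀ c ∈ C, r ≤ f c → M < ‖c‖ / r) :
    ∀ ε > (0 : ℝ), ∃ K > (0 : ℝ), ∀ c ∈ C, K ≤ ‖c‖ → f c / ‖c‖ < ε := by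
  intro ε hε
  obtain ⟨N, hN, hN'⟩ := h (1 / ε) (by positivity)
  refine ⟨N / ε, by positivity, fun c hc hKc => ?_⟩
  have hc_pos : 0 < ‖c‖ := (div_pos hN hε).trans_le hKc
  rw [div_lt_iff₀ hc_pos]
  by_contra! hfc
  have hNf : N ≤ f c := by
    calc N = ε * (N / ε) := by field_simp
      _ ≤ ε * ‖c‖ := by gcongr
      _ ≤ f c := hfc
  have hlt := hN' (f c) hNf c hc le_rfl
  rw [lt_div_iff₀ (hN.trans_le hNf), one_div_mul_eq_div, div_lt_iff₀ hε] at hlt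
  linarith

theorem forall_lt_norm_div_of_forall_div_norm_lt
    (hf : ∀ R, ∃ B, ∀ c, ‖c‖ ≤ R → f c ≤ B)
    (h : ∀ ε > (0 : ℝ), ∃ K > (0 : ℝ), ∀ c ∈ C, K ≤ ‖c‖ → f c / ‖c‖ < ε) :
    ∀ M > (0 : ℝ), ∃ N > (0 : ℝ), ∀ r ≥ N, ∀ c ∈ C, r ≤ f c → M < ‖c‖ / r := by
  intro M hM
  obtain ⟨K, hK, hK'⟩ := h (1 / M) (by positivity)
  obtain ⟨B, hB⟩ := hf K
  refine ⟨|B| + 1, by positivity, fun r hr c hc hrc => ?_⟩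
  have hr_pos : 0 < r := lt_of_lt_of_le (by positivity) hr
  have hKc : K ≤ ‖c‖ := by
    by_contra! hcK
    have := hB c hcK.le
    linarith [le_abs_self B]
  have hc_pos : 0 < ‖c‖ := hK.trans_le hKc
  have hfc := hK' c hc hKc
  rw [div_lt_iff₀ hc_pos, one_div_mul_eq_div, lt_div_iff₀ hM] at hfc
  rw [lt_div_iff₀ hr_pos]
  nlinarith

end

theorem ContinuousLinearMap.exists_apply_le_of_norm_le {X : Type*} [SeminormedAddCommGroup X]
    [NormedSpace ℝ X] (xs : X →L[ℝ] ℝ) (R : ℝ) : ∃ B, ∀ c, ‖c‖ ≤ R → xs c ≤ B :=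
  ⟨‖xs‖ * R, fun c hc =>
    (le_abs_self _).trans ((xs.le_opNorm c).trans (by gcongr))⟩

theorem statement0_general {X : Type*} [NormedAddCommGroup X] [NormedSpace ℝ X]
    (C : Set X) (xs : X →L[ℝ] ℝ) :
    (∀ M > (0 : ℝ), ∃ N > (0 : ℝ), ∀ r ≥ N, ∀ c ∈ C, r ≤ xs c → M < ‖c‖ / r) ↔
      (∀ ε > (0 : ℝ), ∃ K > (0 : ℝ), ∀ c ∈ C, K ≤ ‖c‖ → xs c / ‖c‖ < ε) :=
  ⟨forall_div_norm_lt_of_forall_lt_norm_div C xs,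
    forall_lt_norm_div_of_forall_div_norm_lt C xs xs.exists_apply_le_of_norm_le⟩

/-- For a nonempty set `C` in a real normed space `X` and a nonzero continuous
linear functional `x*`, the condition
`lim_{r→∞} inf{‖c‖/r : c ∈ C, ⟨x*,c⟩ ≥ r} = ∞` (condition (i)) is equivalent to
`limsup_{c∈C, ‖c‖→∞} ⟨x*,c⟩/‖c‖ ≤ 0` (condition (ii)). -/
theorem statement0 {X : Type*} [NormedAddCommGroup X] [NormedSpace ℝ X]
    (C : Set X) (hC : C.Nonempty) (xs : X →L[ℝ] ℝ) (hxs : xs ≠ 0) :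
    (∀ M > (0 : ℝ), ∃ N > (0 : ℝ), ∀ r ≥ N, ∀ c ∈ C, r ≤ xs c → M < ‖c‖ / r) ↔
      (∀ ε > (0 : ℝ), ∃ K > (0 : ℝ), ∀ c ∈ C, K ≤ ‖c‖ → xs c / ‖c‖ < ε) :=
  statement0_general C xs
end

section
/- Let X be a real normed linear space with continuous dual X*, let C ⊆ X be a nonempty closed convex set, and let x* ∈ barc(C). Then the following statements are equivalent: (a) x* belongs to the interior of barc(C) (with respect to the dual norm topology on X*); (b) there exists γ > 0 such that sup{⟨x*, c⟩ : c ∈ C, ‖c‖ ≥ γ} < σ_C(x*); (c) there exist positive numbers α and R such that ⟨x*, c⟩ ≤ −α‖c‖ for all c ∈ C with ‖c‖ ≥ R; (d) there exist ε > 0 and K > 0 such that ⟨x*, c⟩/‖c‖ ≤ −ε for all c ∈ C with ‖c‖ ≥ K (i.e. limsup_{c∈C, ‖c‖→∞} ⟨x*,c⟩/‖c‖ < 0). -/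
/-!
If a ball around `x*` lies in `barc(C)`, then evaluation at the points `c / (b + 1 - ⟨x*, c⟩)`,
`c ∈ C` (with `b` an upper bound of `x*` on `C`), is a pointwise bounded family of functionals
on the Banach space `X*`: `x* ± t h ∈ barc(C)` bounds `t |⟨h, c⟩|` by a constant plus
`b - ⟨x*, c⟩`. Banach–Steinhaus bounds their norms, i.e. `‖c‖ ≤ K (b + 1 - ⟨x*, c⟩)`, which is
linear decay (c). Conversely linear decay at rate `α` survives perturbations of norm `< α / 2`.
For (b) ⇒ (c), pick `c₀ ∈ C` with `⟨x*, c₀⟩ > b`; by convexity the segment from `c₀` to a far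
point `c` passes through `‖·‖ ≥ γ` at a bounded distance from `c₀`, so `x*` drops by a fixed
amount over that distance, and being affine on the segment it decays linearly in `‖c‖`.
-/

open Filter Topology

/-- The barrier cone of a set `C` in a normed space: the set of continuous linear functionals
that are bounded above on `C` (i.e. whose support function value `σ_C(x*)` is finite). -/
def barrierCone {X : Type*} [NormedAddCommGroup X] [NormedSpace ℝ X] (C : Set X) :
    Set (X →L[ℝ] ℝ) :=
  {f | ∃ b : ℝ, ∀ c ∈ C, f c ≤ b}

lemma exists_le_neg_mul_norm_of_le_sub_mul_norm {E : Type*} [SeminormedAddCommGroup E]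
    {C : Set E} {f : E → ℝ} {A β R₀ : ℝ} (hβ : 0 < β)
    (h : ∀ c ∈ C, R₀ ≤ ‖c‖ → f c ≤ A - β * ‖c‖) :
    ∃ α > (0 : ℝ), ∃ R > (0 : ℝ), ∀ c ∈ C, R ≤ ‖c‖ → f c ≤ -α * ‖c‖ := by
  refine ⟨β / 2, half_pos hβ, max (max R₀ (2 * |A| / β)) 1,
    lt_max_of_lt_right one_pos, fun c hc hcR => ?_⟩
  have hR₀ : R₀ ≤ ‖c‖ := le_trans (le_max_left _ _) (le_trans (le_max_left _ _) hcR)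
  have hA : 2 * |A| / β ≤ ‖c‖ := le_trans (le_max_right _ _) (le_trans (le_max_left _ _) hcR)
  rw [div_le_iff₀ hβ] at hA
  nlinarith [h c hc hR₀, le_abs_self A]

lemma exists_le_of_le_neg_mul_norm {E : Type*} [SeminormedAddCommGroup E]
    {C : Set E} {f : E → ℝ} {α R : ℝ} (hα : 0 < α)
    (h : ∀ c ∈ C, R ≤ ‖c‖ → f c ≤ -α * ‖c‖) (b : ℝ) :
    ∃ γ > (0 : ℝ), ∀ c ∈ C, γ ≤ ‖c‖ → f c ≤ b := by
  refine ⟨max (max R (-b / α)) 1, lt_max_of_lt_right one_pos, fun c hc hcγ => ?_⟩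
  have hR : R ≤ ‖c‖ := le_trans (le_max_left _ _) (le_trans (le_max_left _ _) hcγ)
  have hb : -b / α ≤ ‖c‖ := le_trans (le_max_right _ _) (le_trans (le_max_left _ _) hcγ)
  rw [div_le_iff₀ hα] at hb
  linarith [h c hc hR]

section NormedSpace

variable {X : Type*} [NormedAddCommGroup X] [NormedSpace ℝ X] {C : Set X}

lemma Convex.apply_le_of_forall_norm_ge {f : X →L[ℝ] ℝ} {c₀ : X} {γ b : ℝ}
    (hC : Convex ℝ C) (hc₀ : c₀ ∈ C) (hγ : 0 < γ) (hb : ∀ c ∈ C, γ ≤ ‖c‖ → f c ≤ b) {c : X}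
    (hc : c ∈ C) (hcn : γ + 2 * ‖c₀‖ ≤ ‖c‖) :
    f c ≤ f c₀ - (f c₀ - b) / (γ + ‖c₀‖) * ‖c - c₀‖ := by
  set r := γ + ‖c₀‖
  set d := ‖c - c₀‖
  have hr : 0 < r := by positivity
  have hrd : r ≤ d := by linarith [norm_sub_norm_le c c₀]
  have hd : 0 < d := hr.trans_le hrd
  -- `c₀ + t • (c - c₀)` lies at distance `r` from `c₀`, hence outside the ball of radius `γ`
  set t := r / d
  have htd : t * d = r := div_mul_cancel₀ r hd.ne'
  have hp : c₀ + t • (c - c₀) ∈ C :=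
    hC.add_smul_sub_mem hc₀ hc ⟨by positivity, div_le_one_of_le₀ hrd hd.le⟩
  have hpn : γ ≤ ‖c₀ + t • (c - c₀)‖ := by
    have := norm_sub_le (c₀ + t • (c - c₀)) c₀
    rw [add_sub_cancel_left, norm_smul, Real.norm_of_nonneg (by positivity), htd] at this
    linarith
  have hfp : t * (f c - f c₀) * d ≤ (b - f c₀) * d := by
    refine mul_le_mul_of_nonneg_right ?_ hd.le
    have := hb _ hp hpn
    rw [map_add, map_smul, map_sub, smul_eq_mul] at this
    linarith
  rw [mul_right_comm, htd] at hfp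
  rw [div_mul_eq_mul_div, le_sub_comm, div_le_iff₀ hr]
  linarith

lemma exists_le_neg_mul_norm_of_convex {f : X →L[ℝ] ℝ} {c₀ : X} {γ b : ℝ}
    (hC : Convex ℝ C) (hc₀ : c₀ ∈ C) (hγ : 0 < γ) (hb : ∀ c ∈ C, γ ≤ ‖c‖ → f c ≤ b)
    (hbc₀ : b < f c₀) :
    ∃ α > (0 : ℝ), ∃ R > (0 : ℝ), ∀ c ∈ C, R ≤ ‖c‖ → f c ≤ -α * ‖c‖ := by
  set β := (f c₀ - b) / (γ + ‖c₀‖)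
  have hβ : 0 < β := div_pos (sub_pos.2 hbc₀) (by positivity)
  refine exists_le_neg_mul_norm_of_le_sub_mul_norm (A := f c₀ + β * ‖c₀‖)
    (R₀ := γ + 2 * ‖c₀‖) hβ fun c hc hcn => ?_
  have := hC.apply_le_of_forall_norm_ge hc₀ hγ hb hc hcn
  nlinarith [norm_sub_norm_le c c₀]

lemma mem_interior_barrierCone_of_le_neg_mul_norm {f : X →L[ℝ] ℝ} {α R : ℝ} (hα : 0 < α)
    (h : ∀ c ∈ C, R ≤ ‖c‖ → f c ≤ -α * ‖c‖) : f ∈ interior (barrierCone C) := by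
  refine mem_interior_iff_mem_nhds.2 (Metric.mem_nhds_iff.2 ⟨α / 2, half_pos hα, ?_⟩)
  intro g hg
  refine ⟨‖g‖ * |R|, fun c hc => ?_⟩
  by_cases hcR : R ≤ ‖c‖
  · have hgf : (g - f) c ≤ α / 2 * ‖c‖ :=
      ((g - f).le_opNorm c).trans' (le_abs_self _) |>.trans
        (mul_le_mul_of_nonneg_right (mem_ball_iff_norm.1 hg).le (norm_nonneg c))
    have := h c hc hcR
    rw [sub_apply] at hgf
    nlinarith [norm_nonneg c, norm_nonneg g, abs_nonneg R]
  · calc g c ≤ ‖g‖ * ‖c‖ := (le_abs_self _).trans (g.le_opNorm c)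
      _ ≤ ‖g‖ * |R| := by
        gcongr
        exact (lt_of_not_ge hcR).le.trans (le_abs_self R)

lemma exists_abs_apply_le_of_mem_interior_barrierCone {f : X →L[ℝ] ℝ}
    (hf : f ∈ interior (barrierCone C)) {b : ℝ} (hb : ∀ c ∈ C, f c ≤ b) (h : X →L[ℝ] ℝ) :
    ∃ M, ∀ c ∈ C, |h c| ≤ M * (b + 1 - f c) := by
  obtain ⟨δ, hδ, hball⟩ := Metric.mem_nhds_iff.1 (mem_interior_iff_mem_nhds.1 hf)
  set t := δ / (‖h‖ + 1)
  have ht : 0 < t := by positivity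
  have hth : ‖t • h‖ < δ := by
    rw [norm_smul, Real.norm_of_nonneg ht.le, div_mul_eq_mul_div, div_lt_iff₀ (by positivity)]
    nlinarith [norm_nonneg h]
  obtain ⟨B₁, hB₁⟩ : f + t • h ∈ barrierCone C := hball (by simpa [dist_eq_norm] using hth)
  obtain ⟨B₂, hB₂⟩ : f - t • h ∈ barrierCone C := hball (by simpa [dist_eq_norm] using hth)
  set B := max (max B₁ B₂) b
  refine ⟨(B - b + 1) / t, fun c hc => ?_⟩
  have h₁ := hB₁ c hc
  have h₂ := hB₂ c hc
  simp only [add_apply, sub_apply, smul_apply, smul_eq_mul] at h₁ h₂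
  have hBb : b ≤ B := le_max_right _ _
  have htc : t * |h c| ≤ B - f c := by
    rcases abs_cases (h c) with ⟨habs, _⟩ | ⟨habs, _⟩ <;> rw [habs] <;>
      linarith [le_max_left B₁ B₂, le_max_right B₁ B₂, le_max_left (max B₁ B₂) b]
  rw [div_mul_eq_mul_div, le_div_iff₀ ht, mul_comm]
  nlinarith [hb c hc]

lemma exists_norm_le_of_mem_interior_barrierCone {f : X →L[ℝ] ℝ}
    (hf : f ∈ interior (barrierCone C)) {b : ℝ} (hb : ∀ c ∈ C, f c ≤ b) :
    ∃ K, ∀ c ∈ C, ‖c‖ ≤ K * (b + 1 - f c) := by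
  have hpos : ∀ c ∈ C, 0 < b + 1 - f c := fun c hc => by linarith [hb c hc]
  let g : C → (X →L[ℝ] ℝ) →L[ℝ] ℝ := fun c =>
    (b + 1 - f c)⁻¹ • NormedSpace.inclusionInDoubleDual ℝ X c
  have hg : ∀ c : C, ∀ h, ‖g c h‖ = (b + 1 - f c)⁻¹ * |h c| := fun c h => by
    simp [g, abs_of_pos (hpos c c.2)]
  obtain ⟨K, hK⟩ := banach_steinhaus (g := g) fun h => by
    obtain ⟨M, hM⟩ := exists_abs_apply_le_of_mem_interior_barrierCone hf hb h
    refine ⟨M, fun c => ?_⟩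
    rw [hg, inv_mul_le_iff₀ (hpos c c.2), mul_comm]
    exact hM c c.2
  refine ⟨K, fun c hc => NormedSpace.norm_le_dual_bound ℝ c
    (mul_nonneg ((norm_nonneg _).trans (hK ⟨c, hc⟩)) (hpos c hc).le) fun h => ?_⟩
  have := ((g ⟨c, hc⟩).le_opNorm h).trans (mul_le_mul_of_nonneg_right (hK _) (norm_nonneg h))
  rw [hg, inv_mul_le_iff₀ (hpos c hc)] at this
  rw [Real.norm_eq_abs]
  linarith

lemma exists_le_neg_mul_norm_of_mem_interior_barrierCone {f : X →L[ℝ] ℝ}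
    (hf : f ∈ interior (barrierCone C)) :
    ∃ α > (0 : ℝ), ∃ R > (0 : ℝ), ∀ c ∈ C, R ≤ ‖c‖ → f c ≤ -α * ‖c‖ := by
  obtain ⟨b, hb⟩ := interior_subset hf
  obtain ⟨K, hK⟩ := exists_norm_le_of_mem_interior_barrierCone hf hb
  have hK₁ : 0 < max K 1 := lt_max_of_lt_right one_pos
  refine exists_le_neg_mul_norm_of_le_sub_mul_norm (A := b + 1) (R₀ := 0) (inv_pos.2 hK₁)
    fun c hc _ => ?_
  have : ‖c‖ ≤ max K 1 * (b + 1 - f c) :=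
    (hK c hc).trans (mul_le_mul_of_nonneg_right (le_max_left _ _) (by linarith [hb c hc]))
  rw [inv_mul_eq_div, le_sub_comm, div_le_iff₀ hK₁]
  linarith

end NormedSpace

theorem statement1_general {X : Type*} [NormedAddCommGroup X] [NormedSpace ℝ X]
    (C : Set X) (hne : C.Nonempty) (hconv : Convex ℝ C)
    (xs : X →L[ℝ] ℝ) :
    List.TFAE
      [xs ∈ interior (barrierCone C),
       ∃ γ > (0 : ℝ), ∃ b : ℝ, b < sSup (xs '' C) ∧ ∀ c ∈ C, γ ≤ ‖c‖ → xs c ≤ b,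
       ∃ α > (0 : ℝ), ∃ R > (0 : ℝ), ∀ c ∈ C, R ≤ ‖c‖ → xs c ≤ -α * ‖c‖,
       ∃ ε > (0 : ℝ), ∃ K > (0 : ℝ), ∀ c ∈ C, K ≤ ‖c‖ → xs c / ‖c‖ ≤ -ε] := by
  tfae_have 1 → 3 := exists_le_neg_mul_norm_of_mem_interior_barrierCone
  tfae_have 3 → 1 := fun ⟨_, hα, _, _, h⟩ => mem_interior_barrierCone_of_le_neg_mul_norm hα h
  tfae_have 3 → 2 := fun ⟨_, hα, _, _, h⟩ =>
    let ⟨γ, hγ, hγb⟩ := exists_le_of_le_neg_mul_norm hα h (sSup (xs '' C) - 1)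
    ⟨γ, hγ, _, sub_one_lt _, hγb⟩
  tfae_have 2 → 3 := by
    rintro ⟨γ, hγ, b, hbσ, hb⟩
    obtain ⟨_, ⟨c₀, hc₀, rfl⟩, hbc₀⟩ := exists_lt_of_lt_csSup (hne.image xs) hbσ
    exact exists_le_neg_mul_norm_of_convex hconv hc₀ hγ hb hbc₀
  tfae_have 3 ↔ 4 := by
    refine exists_congr fun _ => and_congr_right fun _ => exists_congr fun R =>
      and_congr_right fun (hR : 0 < R) => forall₂_congr fun c _ => forall_congr' fun hc => ?_
    rw [div_le_iff₀ (hR.trans_le hc)]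
  tfae_finish

/-- For a nonempty closed convex set `C` in a real normed space and
`x* ∈ barc(C)`, the following are equivalent:
(a) `x* ∈ Int barc(C)` (interior in the dual norm topology);
(b) there exists `γ > 0` with `sup{⟨x*,c⟩ : c ∈ C, ‖c‖ ≥ γ} < σ_C(x*)`
    (expressed as: some bound `b` strictly below `σ_C(x*) = sSup (x* '' C)` dominates
    `⟨x*,c⟩` for all `c ∈ C` with `‖c‖ ≥ γ`);
(c) there exist `α, R > 0` with `⟨x*,c⟩ ≤ -α‖c‖` for all `c ∈ C`, `‖c‖ ≥ R`;
(d) there exist `ε, K > 0` with `⟨x*,c⟩/‖c‖ ≤ -ε` for all `c ∈ C`, `‖c‖ ≥ K`. -/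
theorem statement1 {X : Type*} [NormedAddCommGroup X] [NormedSpace ℝ X]
    (C : Set X) (hne : C.Nonempty) (hcl : IsClosed C) (hconv : Convex ℝ C)
    (xs : X →L[ℝ] ℝ) (hxs : xs ∈ barrierCone C) :
    List.TFAE
      [xs ∈ interior (barrierCone C),
       ∃ γ > (0 : ℝ), ∃ b : ℝ, b < sSup (xs '' C) ∧ ∀ c ∈ C, γ ≤ ‖c‖ → xs c ≤ b,
       ∃ α > (0 : ℝ), ∃ R > (0 : ℝ), ∀ c ∈ C, R ≤ ‖c‖ → xs c ≤ -α * ‖c‖,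
       ∃ ε > (0 : ℝ), ∃ K > (0 : ℝ), ∀ c ∈ C, K ≤ ‖c‖ → xs c / ‖c‖ ≤ -ε] :=
  statement1_general C hne hconv xs
end

section
/- Let X be a real reflexive Banach space and let C and D be disjoint nonempty closed convex subsets of X such that rec(C) ∩ rec(D) = {0} and at least one of the interiors Int barc(C), Int barc(D) (taken in the norm topology of X*) is nonempty. Then C and D are strongly separated, i.e. there exists x* ∈ X* \ {0} with sup{⟨x*, c⟩ : c ∈ C} < inf{⟨x*, d⟩ : d ∈ D}; equivalently, dist(C, D) = inf{‖c − d‖ : c ∈ C, d ∈ D} > 0. -/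
/-- The recession cone of a set `C`: vectors `v` with `c + v ∈ C` for all `c ∈ C`. -/
def recessionCone {X : Type*} [NormedAddCommGroup X] [NormedSpace ℝ X] (C : Set X) :
    Set X :=
  {v | ∀ c ∈ C, c + v ∈ C}

/-- `C` and `D` are strongly separated: there is a nonzero continuous linear functional whose
supremum over `C` is strictly smaller than its infimum over `D`. -/
def StronglySeparated {X : Type*} [NormedAddCommGroup X] [NormedSpace ℝ X]
    (C D : Set X) : Prop :=
  ∃ f : X →L[ℝ] ℝ, f ≠ 0 ∧ ∃ a b : ℝ, a < b ∧ (∀ c ∈ C, f c ≤ a) ∧ ∀ d ∈ D, b ≤ f d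

open Filter Topology Set Metric Pointwise

theorem MapClusterPt.add_tendsto {M ι : Type*} [TopologicalSpace M] [Add M] [ContinuousAdd M]
    {l : Filter ι} {u w : ι → M} {x y : M} (hu : MapClusterPt x l u) (hw : Tendsto w l (𝓝 y)) :
    MapClusterPt (x + y) l (fun i => u i + w i) := by
  rw [mapClusterPt_iff_frequently] at hu ⊢
  intro s hs
  obtain ⟨t, ht, r, hr, hsub⟩ := mem_nhds_prod_iff.1 (continuous_add.tendsto (x, y) hs)
  exact ((hu t ht).and_eventually (hw hr)).mono fun i hi => hsub (mk_mem_prod hi.1 hi.2)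

section WeakTopology

variable {X : Type*} [NormedAddCommGroup X] [NormedSpace ℝ X] {ι : Type*} {l : Filter ι}

theorem exists_mapClusterPt_toWeakSpace_of_frequently_norm_le
    (hrefl : Function.Surjective (NormedSpace.inclusionInDoubleDual ℝ X))
    {u : ι → X} {R : ℝ} (hu : ∃ᶠ i in l, ‖u i‖ ≤ R) :
    ∃ v : X, MapClusterPt (toWeakSpace ℝ X v) l (toWeakSpace ℝ X ∘ u) := by
  set S := toWeakSpace ℝ X '' closedBall (0 : X) R
  have hS : IsCompact (closure S) := by
    refine NormedSpace.isCompact_closure_of_isBounded ℝ X S ?_ fun Φ _ => ?_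
    · rw [(toWeakSpace ℝ X).injective.preimage_image]
      exact isBounded_closedBall
    · obtain ⟨x, hx⟩ := hrefl (WeakDual.toStrongDual Φ)
      exact ⟨x, congrArg StrongDual.toWeakDual hx⟩
  obtain ⟨v, -, hv⟩ := hS.exists_mapClusterPt_of_frequently
    (hu.mono fun i hi => subset_closure ⟨u i, by simpa using hi, rfl⟩)
  exact ⟨(toWeakSpace ℝ X).symm v, by simpa [Function.comp_def] using hv⟩

theorem Convex.isClosed_toWeakSpace_image {C : Set X} (hCcv : Convex ℝ C) (hCcl : IsClosed C) :
    IsClosed (toWeakSpace ℝ X '' C) := by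
  rw [← closure_eq_iff_isClosed, ← hCcv.toWeakSpace_closure ℝ, hCcl.closure_eq]

theorem Convex.mem_of_mapClusterPt_toWeakSpace {C : Set X} (hCcv : Convex ℝ C)
    (hCcl : IsClosed C) {u : ι → X} {v : X}
    (hv : MapClusterPt (toWeakSpace ℝ X v) l (toWeakSpace ℝ X ∘ u)) (hu : ∀ᶠ i in l, u i ∈ C) :
    v ∈ C :=
  (toWeakSpace ℝ X).injective.mem_set_image.1 <|
    (hCcv.isClosed_toWeakSpace_image hCcl).mem_of_mapClusterPt hv
      (hu.mono fun _ => mem_image_of_mem _)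

theorem MapClusterPt.toWeakSpace_add {u w : ι → X} {v y : X}
    (hv : MapClusterPt (toWeakSpace ℝ X v) l (toWeakSpace ℝ X ∘ u)) (hw : Tendsto w l (𝓝 y)) :
    MapClusterPt (toWeakSpace ℝ X (v + y)) l (toWeakSpace ℝ X ∘ fun i => u i + w i) := by
  simpa [Function.comp_def] using
    hv.add_tendsto (((toWeakSpaceCLM ℝ X).continuous.tendsto y).comp hw)

theorem MapClusterPt.apply_toWeakSpace {u : ι → X} {v : X}
    (hv : MapClusterPt (toWeakSpace ℝ X v) l (toWeakSpace ℝ X ∘ u)) (f : StrongDual ℝ X) :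
    MapClusterPt (f v) l (fun i => f (u i)) :=
  hv.continuousAt_comp (X := WeakSpace ℝ X)
    (WeakBilin.eval_continuous (topDualPairing ℝ X).flip f).continuousAt

theorem mem_recessionCone_of_mapClusterPt_toWeakSpace {S : Set X} (hScv : Convex ℝ S)
    (hScl : IsClosed S) {s : ι → X} (hs : ∀ i, s i ∈ S) {t : ι → ℝ} (ht₀ : ∀ i, 0 ≤ t i)
    (ht : Tendsto t l (𝓝 0)) {v : X}
    (hv : MapClusterPt (toWeakSpace ℝ X v) l (toWeakSpace ℝ X ∘ fun i => t i • s i)) :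
    v ∈ recessionCone S := by
  intro c hc
  have hlim : Tendsto (fun i => (1 - t i) • c) l (𝓝 c) := by
    simpa using (ht.const_sub 1).smul_const c
  rw [add_comm]
  refine hScv.mem_of_mapClusterPt_toWeakSpace hScl (hv.toWeakSpace_add hlim) ?_
  filter_upwards [ht.eventually_le_const one_pos] with i hi
  exact hScv (hs i) hc (ht₀ i) (by linarith) (by ring)

end WeakTopology

section BarrierCone

variable {X : Type*} [NormedAddCommGroup X] [NormedSpace ℝ X] {C : Set X}

theorem exists_ball_forall_le_of_interior_barrierCone_nonempty
    (hC : (interior (barrierCone C)).Nonempty) :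
    ∃ g : StrongDual ℝ X, ∃ r > 0, ∃ M : ℝ, ∀ f ∈ ball g r, ∀ c ∈ C, f c ≤ M := by
  obtain ⟨g₀, hg₀⟩ := hC
  obtain ⟨ρ, hρ, hball⟩ := isOpen_iff.1 isOpen_interior g₀ hg₀
  let T : ℕ → Set (StrongDual ℝ X) := fun n => ⋂ c ∈ C, {f | f c ≤ n}
  have hT : ∀ n, IsClosed (T n) := fun n =>
    isClosed_biInter fun c _ => isClosed_le (ContinuousLinearMap.apply ℝ ℝ c).continuous
      continuous_const
  have hcover : ball g₀ ρ ⊆ ⋃ n, T n := by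
    intro f hf
    obtain ⟨b, hb⟩ := interior_subset (hball hf)
    exact mem_iUnion.2 ⟨⌈b⌉₊, mem_iInter₂.2 fun c hc => (hb c hc).trans (Nat.le_ceil b)⟩
  obtain ⟨n, g, hg⟩ : ∃ n, (interior (T n)).Nonempty := by
    by_contra! h
    refine not_isMeagre_of_isOpen isOpen_ball (nonempty_ball (x := g₀).2 hρ) ?_
    exact (isMeagre_iUnion fun n => ((hT n).isNowhereDense_iff.2 (h n)).isMeagre).mono hcover
  obtain ⟨r, hr, hgr⟩ := isOpen_iff.1 isOpen_interior g hg
  exact ⟨g, r, hr, n, fun f hf c hc => mem_iInter₂.1 (interior_subset (hgr hf)) c hc⟩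

theorem exists_add_mul_norm_le_of_interior_barrierCone_nonempty
    (hC : (interior (barrierCone C)).Nonempty) :
    ∃ (g : StrongDual ℝ X) (ε M : ℝ), 0 < ε ∧ ∀ c ∈ C, g c + ε * ‖c‖ ≤ M := by
  obtain ⟨g, r, hr, M, hM⟩ := exists_ball_forall_le_of_interior_barrierCone_nonempty hC
  refine ⟨g, r / 2, M, half_pos hr, fun c hc => ?_⟩
  obtain ⟨φ, hφ, hφc⟩ := exists_dual_vector'' ℝ c
  have hmem : g + (r / 2) • φ ∈ ball g r := by
    rw [mem_ball, dist_eq_norm, add_sub_cancel_left, norm_smul,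
      Real.norm_of_nonneg (half_pos hr).le]
    calc r / 2 * ‖φ‖ ≤ r / 2 * 1 := by gcongr
      _ < r := by linarith
  simpa [hφc] using hM _ hmem c hc

end BarrierCone

section Distance

variable {X : Type*} [NormedAddCommGroup X] [NormedSpace ℝ X] {C D : Set X}
  {ι : Type*} {l : Filter ι} {c d : ι → X}

theorem inter_nonempty_of_tendsto_sub_of_frequently_norm_le
    (hrefl : Function.Surjective (NormedSpace.inclusionInDoubleDual ℝ X))
    (hCcv : Convex ℝ C) (hDcv : Convex ℝ D) (hCcl : IsClosed C) (hDcl : IsClosed D)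
    (hc : ∀ i, c i ∈ C) (hd : ∀ i, d i ∈ D) (hdc : Tendsto (d - c) l (𝓝 0))
    {R : ℝ} (hR : ∃ᶠ i in l, ‖c i‖ ≤ R) : (C ∩ D).Nonempty := by
  obtain ⟨v, hv⟩ := exists_mapClusterPt_toWeakSpace_of_frequently_norm_le hrefl hR
  have hvd : MapClusterPt (toWeakSpace ℝ X v) l (toWeakSpace ℝ X ∘ d) := by
    simpa using hv.toWeakSpace_add hdc
  exact ⟨v, hCcv.mem_of_mapClusterPt_toWeakSpace hCcl hv (.of_forall hc),
    hDcv.mem_of_mapClusterPt_toWeakSpace hDcl hvd (.of_forall hd)⟩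

theorem exists_ne_zero_mem_recessionCone_of_tendsto_sub [l.NeBot]
    (hrefl : Function.Surjective (NormedSpace.inclusionInDoubleDual ℝ X))
    (hCcv : Convex ℝ C) (hDcv : Convex ℝ D) (hCcl : IsClosed C) (hDcl : IsClosed D)
    (hc : ∀ i, c i ∈ C) (hd : ∀ i, d i ∈ D) (hdc : Tendsto (d - c) l (𝓝 0))
    (hcl : Tendsto (fun i => ‖c i‖) l atTop) {g : StrongDual ℝ X} {ε M : ℝ} (hε : 0 < ε)
    (hgC : ∀ x ∈ C, g x + ε * ‖x‖ ≤ M) :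
    ∃ v ≠ 0, v ∈ recessionCone C ∩ recessionCone D := by
  set t : ι → ℝ := fun i => ‖c i‖⁻¹
  have ht₀ : ∀ i, 0 ≤ t i := fun i => inv_nonneg.2 (norm_nonneg _)
  have ht : Tendsto t l (𝓝 0) := hcl.inv_tendsto_atTop
  have hbdd : ∃ᶠ i in l, ‖t i • c i‖ ≤ 1 := .of_forall fun i => by
    rw [norm_smul, Real.norm_of_nonneg (ht₀ i)]
    exact inv_mul_le_one
  obtain ⟨v, hv⟩ := exists_mapClusterPt_toWeakSpace_of_frequently_norm_le hrefl hbdd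
  have hgv : g v ≤ -(ε / 2) := by
    refine isClosed_Iic.mem_of_mapClusterPt (hv.apply_toWeakSpace g) ?_
    filter_upwards [hcl.eventually_gt_atTop 0, (ht.mul_const M).eventually_le_const
      (show 0 * M < ε / 2 by rw [zero_mul]; exact half_pos hε)] with i hci htM
    have hti : t i * ‖c i‖ = 1 := inv_mul_cancel₀ hci.ne'
    show g (t i • c i) ≤ -(ε / 2)
    calc g (t i • c i) = t i * g (c i) := by rw [map_smul, smul_eq_mul]
      _ ≤ t i * (M - ε * ‖c i‖) := by gcongr; linarith [hgC _ (hc i)]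
      _ = t i * M - ε := by rw [mul_sub, mul_left_comm, hti, mul_one]
      _ ≤ -(ε / 2) := by linarith
  refine ⟨v, fun hv0 => by simp [hv0] at hgv; linarith,
    mem_recessionCone_of_mapClusterPt_toWeakSpace hCcv hCcl hc ht₀ ht hv,
    mem_recessionCone_of_mapClusterPt_toWeakSpace hDcv hDcl hd ht₀ ht ?_⟩
  have hw : Tendsto (fun i => t i • (d i - c i)) l (𝓝 0) := by simpa using ht.smul hdc
  simpa [← smul_add] using hv.toWeakSpace_add hw

theorem exists_pos_forall_le_norm_sub_of_add_mul_norm_le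
    (hrefl : Function.Surjective (NormedSpace.inclusionInDoubleDual ℝ X))
    (hCcv : Convex ℝ C) (hDcv : Convex ℝ D) (hCcl : IsClosed C) (hDcl : IsClosed D)
    (hdisj : Disjoint C D)
    (hrec : recessionCone C ∩ recessionCone D = {0}) {g : StrongDual ℝ X} {ε M : ℝ}
    (hε : 0 < ε) (hgC : ∀ x ∈ C, g x + ε * ‖x‖ ≤ M) :
    ∃ δ > 0, ∀ c ∈ C, ∀ d ∈ D, δ ≤ ‖c - d‖ := by
  by_contra! h
  choose c hc d hd hcd using fun n : ℕ => h (1 / (n + 1)) Nat.one_div_pos_of_nat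
  have hdc : Tendsto (d - c) atTop (𝓝 0) :=
    squeeze_zero_norm (fun n => by rw [Pi.sub_apply, norm_sub_rev]; exact (hcd n).le)
      tendsto_one_div_add_atTop_nhds_zero_nat
  by_cases hbdd : ∃ R, ∃ᶠ n in atTop, ‖c n‖ ≤ R
  · obtain ⟨R, hR⟩ := hbdd
    obtain ⟨x, hxC, hxD⟩ := inter_nonempty_of_tendsto_sub_of_frequently_norm_le hrefl hCcv hDcv
      hCcl hDcl hc hd hdc hR
    exact disjoint_left.1 hdisj hxC hxD
  · simp only [not_exists, not_frequently, not_le] at hbdd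
    have hcl : Tendsto (fun n => ‖c n‖) atTop atTop :=
      tendsto_atTop.2 fun R => (hbdd R).mono fun _ => le_of_lt
    obtain ⟨v, hv0, hv⟩ := exists_ne_zero_mem_recessionCone_of_tendsto_sub hrefl hCcv hDcv hCcl
      hDcl hc hd hdc hcl hε hgC
    exact hv0 (by simpa [hrec] using hv)

end Distance

theorem stronglySeparated_of_forall_le_norm_sub {X : Type*} [NormedAddCommGroup X]
    [NormedSpace ℝ X] {C D : Set X} (hC : C.Nonempty) (hD : D.Nonempty) (hCcv : Convex ℝ C)
    (hDcv : Convex ℝ D) {δ : ℝ} (hδ : 0 < δ) (h : ∀ c ∈ C, ∀ d ∈ D, δ ≤ ‖c - d‖) :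
    StronglySeparated C D := by
  have hdisj : Disjoint (ball (0 : X) δ) (D - C) := by
    rw [disjoint_left]
    rintro _ hx ⟨d, hd, c, hc, rfl⟩
    rw [mem_ball_zero_iff, norm_sub_rev] at hx
    exact (h c hc d hd).not_gt hx
  obtain ⟨f, u, hfball, hfDC⟩ :=
    geometric_hahn_banach_open (convex_ball 0 δ) isOpen_ball (hDcv.sub hCcv) hdisj
  have hu : 0 < u := by simpa using hfball 0 (mem_ball_self hδ)
  have hsep : ∀ c ∈ C, ∀ d ∈ D, f c + u ≤ f d := fun c hc d hd => by
    have := hfDC (d - c) (sub_mem_sub hd hc)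
    rw [map_sub] at this
    linarith
  obtain ⟨c₀, hc₀⟩ := hC
  obtain ⟨d₀, hd₀⟩ := hD
  have hbdd : BddAbove (f '' C) :=
    ⟨f d₀ - u, forall_mem_image.2 fun c hc => by linarith [hsep c hc d₀ hd₀]⟩
  refine ⟨f, ?_, sSup (f '' C), sSup (f '' C) + u, by linarith,
    fun c hc => le_csSup hbdd (mem_image_of_mem f hc), fun d hd => ?_⟩
  · rintro rfl
    have := hsep c₀ hc₀ d₀ hd₀
    simp only [zero_apply, zero_add] at this
    linarith
  · have := csSup_le ⟨_, mem_image_of_mem f hc₀⟩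
      (forall_mem_image.2 fun c hc => le_sub_iff_add_le.2 (hsep c hc d hd))
    linarith

theorem statement3_general {X : Type*} [NormedAddCommGroup X] [NormedSpace ℝ X]
    (hrefl : Function.Surjective (NormedSpace.inclusionInDoubleDual ℝ X))
    (C D : Set X) (hCne : C.Nonempty) (hDne : D.Nonempty)
    (hCcl : IsClosed C) (hDcl : IsClosed D) (hCcv : Convex ℝ C) (hDcv : Convex ℝ D)
    (hdisj : Disjoint C D)
    (hrec : recessionCone C ∩ recessionCone D = {0})
    (hint : (interior (barrierCone C)).Nonempty ∨ (interior (barrierCone D)).Nonempty) :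
    StronglySeparated C D ∧ ∃ δ > (0 : ℝ), ∀ c ∈ C, ∀ d ∈ D, δ ≤ ‖c - d‖ := by
  have hdist : ∃ δ > (0 : ℝ), ∀ c ∈ C, ∀ d ∈ D, δ ≤ ‖c - d‖ := by
    rcases hint with hC | hD
    · obtain ⟨g, ε, M, hε, hg⟩ := exists_add_mul_norm_le_of_interior_barrierCone_nonempty hC
      exact exists_pos_forall_le_norm_sub_of_add_mul_norm_le hrefl hCcv hDcv hCcl hDcl hdisj hrec
        hε hg
    · obtain ⟨g, ε, M, hε, hg⟩ := exists_add_mul_norm_le_of_interior_barrierCone_nonempty hD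
      obtain ⟨δ, hδ, h⟩ := exists_pos_forall_le_norm_sub_of_add_mul_norm_le hrefl hDcv hCcv hDcl
        hCcl hdisj.symm (by rwa [inter_comm]) hε hg
      exact ⟨δ, hδ, fun c hc d hd => norm_sub_rev c d ▸ h d hd c hc⟩
  obtain ⟨δ, hδ, h⟩ := hdist
  exact ⟨stronglySeparated_of_forall_le_norm_sub hCne hDne hCcv hDcv hδ h, δ, hδ, h⟩

/-- In a real reflexive Banach space, disjoint nonempty closed convex sets `C`, `D`
with `rec(C) ∩ rec(D) = {0}` such that `Int barc(C)` or `Int barc(D)` is nonempty are strongly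
separated; equivalently, `dist(C, D) > 0`. -/
theorem statement3 {X : Type*} [NormedAddCommGroup X] [NormedSpace ℝ X] [CompleteSpace X]
    (hrefl : Function.Surjective (NormedSpace.inclusionInDoubleDual ℝ X))
    (C D : Set X) (hCne : C.Nonempty) (hDne : D.Nonempty)
    (hCcl : IsClosed C) (hDcl : IsClosed D) (hCcv : Convex ℝ C) (hDcv : Convex ℝ D)
    (hdisj : Disjoint C D)
    (hrec : recessionCone C ∩ recessionCone D = {0})
    (hint : (interior (barrierCone C)).Nonempty ∨ (interior (barrierCone D)).Nonempty) :
    StronglySeparated C D ∧ ∃ δ > (0 : ℝ), ∀ c ∈ C, ∀ d ∈ D, δ ≤ ‖c - d‖ :=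
  statement3_general hrefl C D hCne hDne hCcl hDcl hCcv hDcv hdisj hrec hint
end

section
/- Let C be a nonempty closed convex subset of a real normed linear space X and let (c_n) be a sequence in C such that ‖c_n‖ → ∞ and the sequence c_n/‖c_n‖ converges weakly to some u ∈ X. Then u ∈ rec(C). -/
open Filter Topology

/-- If `C` is a nonempty closed convex subset of a real normed space, `(c_n) ⊆ C`
with `‖c_n‖ → ∞`, and `c_n/‖c_n‖` converges weakly to `u` (i.e. `f(c_n/‖c_n‖) → f(u)` for every
continuous linear functional `f`), then `u ∈ rec(C)`. -/
theorem statement4 {X : Type*} [NormedAddCommGroup X] [NormedSpace ℝ X]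
    (C : Set X) (hne : C.Nonempty) (hcl : IsClosed C) (hconv : Convex ℝ C)
    (c : ℕ → X) (hmem : ∀ n, c n ∈ C)
    (hnorm : Tendsto (fun n => ‖c n‖) atTop atTop) (u : X)
    (hweak : ∀ f : X →L[ℝ] ℝ,
      Tendsto (fun n => f (‖c n‖⁻¹ • c n)) atTop (nhds (f u))) :
    u ∈ recessionCone C := by
  intro c0 hc0
  by_contra h
  obtain ⟨f, s, hfs, hs⟩ := geometric_hahn_banach_closed_point hconv hcl h
  have ht : Tendsto (fun n => ‖c n‖⁻¹) atTop (nhds 0) := hnorm.inv_tendsto_atTop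
  have hlim : Tendsto (fun n => (1 - ‖c n‖⁻¹) * f c0 + f (‖c n‖⁻¹ • c n)) atTop
      (nhds (f (c0 + u))) := by
    have heq : f (c0 + u) = (1 - 0) * f c0 + f u := by simp [map_add]
    rw [heq]
    exact ((tendsto_const_nhds.sub ht).mul tendsto_const_nhds).add (hweak f)
  have hev : ∀ᶠ n in atTop, (1 - ‖c n‖⁻¹) * f c0 + f (‖c n‖⁻¹ • c n) ≤ s := by
    filter_upwards [hnorm.eventually_ge_atTop 1] with n hn
    have hpos : (0:ℝ) < ‖c n‖ := lt_of_lt_of_le one_pos hn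
    have h01 : ‖c n‖⁻¹ ≤ 1 := inv_le_one_of_one_le₀ hn
    have hmem' : (1 - ‖c n‖⁻¹) • c0 + ‖c n‖⁻¹ • c n ∈ C :=
      hconv hc0 (hmem n) (by linarith) (inv_nonneg.2 hpos.le) (by ring)
    have := (hfs _ hmem').le
    simpa [map_add, map_smul, smul_eq_mul] using this
  have := le_of_tendsto hlim hev
  linarith
end

section
/- Let C be a nonempty closed convex subset of a real normed linear space X and let (c_n) ⊂ C be a sequence with ‖c_n‖ → ∞. Assume at least one of the following conditions holds: (A) X is a reflexive Banach space and Int barc(C) ≠ ∅; (B) C is locally compact; (C) there exist r > 0 and a finite-dimensional linear subspace Z ⊆ X with C ⊆ B(0; r) + Z. Then there exist a subsequence (c_{n_k}) of (c_n), a functional x*₀ ∈ X* with ‖x*₀‖ = 1, and a number ρ > 0 such that ⟨x*₀, c_{n_k}/‖c_{n_k}‖⟩ → −ρ as k → ∞. -/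
open Filter Topology Pointwise

/-!
Under (B) and (C) the normalised sequence `‖c n‖⁻¹ • c n` has a convergent subsequence, whose
limit `u` is a unit vector; a norming functional of `-u` then does the job. Normalisation is
insensitive to bounded perturbations of vectors of large norm, so one may replace `c n` by
`c n - c₀` (under (B), where convexity pulls it back to the compact piece of `C` on the sphere of
radius `r` about `c₀`) or by its component in the finite-dimensional subspace `Z` (under (C)).
Under (A), Baire's theorem in the Banach space `X →L[ℝ] ℝ` shows that the support function of `C`
is bounded on some ball `B(g, δ)`, i.e. `g x + δ ‖x‖ ≤ b` on `C`; hence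
`g (‖c n‖⁻¹ • c n) ≤ b / ‖c n‖ - δ`, and a convergent subsequence of these values has a negative
limit.
-/

open Metric

section

variable {X : Type*} [NormedAddCommGroup X] [NormedSpace ℝ X]

lemma norm_inv_norm_smul_le (x : X) : ‖‖x‖⁻¹ • x‖ ≤ 1 := by
  rw [norm_smul, norm_inv, norm_norm]
  exact inv_mul_le_one_of_le₀ le_rfl (norm_nonneg x)

lemma norm_inv_norm_smul_sub_inv_norm_smul_le {x : X} (hx : x ≠ 0) (y : X) :
    ‖‖x‖⁻¹ • x - ‖y‖⁻¹ • y‖ ≤ 2 * ‖x - y‖ / ‖x‖ := by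
  have hx' : 0 < ‖x‖ := norm_pos_iff.2 hx
  have hscale : ‖(‖x‖⁻¹ - ‖y‖⁻¹) • y‖ ≤ ‖x - y‖ / ‖x‖ := by
    rcases eq_or_ne y 0 with rfl | hy
    · simp only [smul_zero, norm_zero]; positivity
    have hy' : 0 < ‖y‖ := norm_pos_iff.2 hy
    have : (‖x‖⁻¹ - ‖y‖⁻¹) * ‖y‖ = (‖y‖ - ‖x‖) / ‖x‖ := by field_simp
    rw [norm_smul, Real.norm_eq_abs, ← abs_of_pos hy', ← abs_mul, abs_of_pos hy', this,
      abs_div, abs_of_pos hx', norm_sub_rev x y]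
    gcongr
    exact abs_norm_sub_norm_le y x
  calc ‖‖x‖⁻¹ • x - ‖y‖⁻¹ • y‖ = ‖‖x‖⁻¹ • (x - y) + (‖x‖⁻¹ - ‖y‖⁻¹) • y‖ := by
        congr 1; module
    _ ≤ ‖x‖⁻¹ * ‖x - y‖ + ‖x - y‖ / ‖x‖ := by
        grw [norm_add_le, norm_smul, norm_inv, norm_norm, hscale]
    _ = 2 * ‖x - y‖ / ‖x‖ := by ring

lemma tendsto_inv_norm_smul_of_norm_sub_le {ι : Type*} {l : Filter ι} {c v : ι → X}
    (hc : Tendsto (fun i => ‖c i‖) l atTop) {R : ℝ} (hR : ∀ i, ‖c i - v i‖ ≤ R) {u : X}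
    (hv : Tendsto (fun i => ‖v i‖⁻¹ • v i) l (𝓝 u)) :
    Tendsto (fun i => ‖c i‖⁻¹ • c i) l (𝓝 u) := by
  have hclose : Tendsto (fun i => ‖c i‖⁻¹ • c i - ‖v i‖⁻¹ • v i) l (𝓝 0) := by
    refine squeeze_zero_norm' ?_ ((tendsto_const_nhds (x := 2 * R)).div_atTop hc)
    filter_upwards [hc.eventually_gt_atTop 0] with i hi
    grw [norm_inv_norm_smul_sub_inv_norm_smul_le (norm_pos_iff.1 hi), hR i]
  simpa using hclose.add hv

lemma norm_eq_one_of_tendsto_inv_norm_smul {ι : Type*} {l : Filter ι} [l.NeBot] {c : ι → X}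
    (hc : Tendsto (fun i => ‖c i‖) l atTop) {u : X}
    (h : Tendsto (fun i => ‖c i‖⁻¹ • c i) l (𝓝 u)) : ‖u‖ = 1 := by
  refine tendsto_nhds_unique h.norm (tendsto_const_nhds.congr' ?_)
  filter_upwards [hc.eventually_gt_atTop 0] with i hi
  simpa using (norm_smul_inv_norm (𝕜 := ℝ) (norm_pos_iff.1 hi)).symm

lemma exists_norm_eq_one_tendsto_neg_of_tendsto_neg (g : X →L[ℝ] ℝ) {v : ℕ → X} {a : ℝ}
    (ha : a < 0) (h : Tendsto (fun k => g (v k)) atTop (𝓝 a)) :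
    ∃ xs : X →L[ℝ] ℝ, ‖xs‖ = 1 ∧ ∃ ρ > (0 : ℝ), Tendsto (fun k => xs (v k)) atTop (𝓝 (-ρ)) := by
  have hg : g ≠ 0 := by
    rintro rfl
    simp only [zero_apply] at h
    exact ha.ne' (tendsto_nhds_unique tendsto_const_nhds h)
  refine ⟨‖g‖⁻¹ • g, by simpa using norm_smul_inv_norm (𝕜 := ℝ) hg, -(‖g‖⁻¹ * a), ?_, ?_⟩
  · exact neg_pos.2 (mul_neg_of_pos_of_neg (inv_pos.2 (norm_pos_iff.2 hg)) ha)
  · simpa using h.const_mul ‖g‖⁻¹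

lemma exists_norm_eq_one_tendsto_neg_of_tendsto {v : ℕ → X} {u : X} (hu : ‖u‖ = 1)
    (h : Tendsto v atTop (𝓝 u)) :
    ∃ xs : X →L[ℝ] ℝ, ‖xs‖ = 1 ∧ ∃ ρ > (0 : ℝ), Tendsto (fun k => xs (v k)) atTop (𝓝 (-ρ)) := by
  obtain ⟨f, -, hfu⟩ := exists_dual_vector ℝ u (by simp [hu])
  refine exists_norm_eq_one_tendsto_neg_of_tendsto_neg (-f) neg_one_lt_zero ?_
  have hfv : Tendsto (fun k => f (v k)) atTop (𝓝 1) := by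
    simpa [hfu, hu, Function.comp_def] using (f.continuous.tendsto u).comp h
  simpa using hfv.neg

lemma exists_subseq_tendsto_inv_norm_smul_of_isCompact_inter_closedBall {C : Set X}
    (hconv : Convex ℝ C) {c : ℕ → X} (hmem : ∀ n, c n ∈ C)
    (hnorm : Tendsto (fun n => ‖c n‖) atTop atTop) {c₀ : X} (hc₀ : c₀ ∈ C) {r : ℝ} (hr : 0 < r)
    (hK : IsCompact (C ∩ closedBall c₀ r)) :
    ∃ φ : ℕ → ℕ, StrictMono φ ∧ ∃ u : X,
      Tendsto (fun k => ‖c (φ k)‖⁻¹ • c (φ k)) atTop (𝓝 u) := by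
  set d : ℕ → X := fun n => c n - c₀
  have hd : Tendsto (fun n => ‖d n‖) atTop atTop :=
    tendsto_atTop_mono (fun n => by linarith [norm_sub_norm_le (c n) c₀])
      (tendsto_atTop_add_const_right _ (-‖c₀‖) hnorm)
  set y : ℕ → X := fun n => c₀ + (r * ‖d n‖⁻¹) • d n
  have hyK : ∀ᶠ n in atTop, y n ∈ C ∩ closedBall c₀ r := by
    filter_upwards [hd.eventually_ge_atTop r] with n hn
    have hdn : 0 < ‖d n‖ := hr.trans_le hn
    refine ⟨hconv.add_smul_sub_mem hc₀ (hmem n) ⟨by positivity, ?_⟩, ?_⟩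
    · rw [← div_eq_mul_inv]; exact (div_le_one hdn).2 hn
    · rw [mem_closedBall, dist_eq_norm, add_sub_cancel_left, norm_smul, Real.norm_eq_abs,
        abs_of_pos (by positivity), inv_mul_cancel_right₀ hdn.ne']
  obtain ⟨a, -, φ, hφ, hya⟩ := hK.tendsto_subseq' hyK.frequently
  have hdφ : Tendsto (fun k => ‖d (φ k)‖⁻¹ • d (φ k)) atTop (𝓝 (r⁻¹ • (a - c₀))) := by
    refine ((hya.sub_const c₀).const_smul r⁻¹).congr fun k => ?_
    simp only [Function.comp_apply, y, add_sub_cancel_left, smul_smul,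
      inv_mul_cancel_left₀ hr.ne']
  exact ⟨φ, hφ, _, tendsto_inv_norm_smul_of_norm_sub_le (R := ‖c₀‖)
    (hnorm.comp hφ.tendsto_atTop) (fun k => by simp [d]) hdφ⟩

lemma exists_subseq_tendsto_inv_norm_smul_of_subset_ball_add {C : Set X} {c : ℕ → X}
    (hmem : ∀ n, c n ∈ C) (hnorm : Tendsto (fun n => ‖c n‖) atTop atTop) {r : ℝ}
    {Z : Submodule ℝ X} [FiniteDimensional ℝ Z] (hsub : C ⊆ ball (0 : X) r + (Z : Set X)) :
    ∃ φ : ℕ → ℕ, StrictMono φ ∧ ∃ u : X,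
      Tendsto (fun k => ‖c (φ k)‖⁻¹ • c (φ k)) atTop (𝓝 u) := by
  choose b hb z hz hbz using fun n => Set.mem_add.1 (hsub (hmem n))
  set w : ℕ → Z := fun n => ‖z n‖⁻¹ • ⟨z n, hz n⟩
  have hw : ∀ n, w n ∈ closedBall (0 : Z) 1 := fun n => by
    simpa [w] using norm_inv_norm_smul_le (z n)
  obtain ⟨a, -, φ, hφ, hwa⟩ := (isCompact_closedBall (0 : Z) 1).tendsto_subseq hw
  refine ⟨φ, hφ, a, tendsto_inv_norm_smul_of_norm_sub_le (R := r) (v := z ∘ φ)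
    (hnorm.comp hφ.tendsto_atTop) (fun k => ?_) ((continuous_subtype_val.tendsto a).comp hwa)⟩
  simpa [← hbz] using (mem_ball_zero_iff.1 (hb (φ k))).le

lemma exists_uniform_bound_on_ball_of_interior_barrierCone_nonempty {C : Set X}
    (hint : (interior (barrierCone C)).Nonempty) :
    ∃ g : X →L[ℝ] ℝ, ∃ δ > (0 : ℝ), ∃ b : ℝ, ∀ h ∈ ball g δ, ∀ x ∈ C, h x ≤ b := by
  obtain ⟨f, hf⟩ := hint
  obtain ⟨ε, hε, hball⟩ := isOpen_iff.1 isOpen_interior f hf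
  obtain ⟨M, hM⟩ := interior_subset hf
  -- Unlike the sublevel sets `{h | ∀ x ∈ C, h x ≤ m}`, which only cover the barrier cone, the sets
  -- `B m` cover the whole dual space, as Baire's theorem requires.
  set B : ℕ → Set (X →L[ℝ] ℝ) := fun m => {h | ∀ x ∈ C, (m : ℝ) * f x + h x ≤ (m : ℝ) ^ 2}
  have hB_closed : ∀ m, IsClosed (B m) := fun m => by
    simp only [B, Set.ofPred_forall]
    exact isClosed_biInter fun x _ =>
      isClosed_le (continuous_const.add (continuous_eval_const x)) continuous_const
  have hB_cover : ⋃ m, B m = Set.univ := by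
    refine Set.eq_univ_of_forall fun h => Set.mem_iUnion.2 ?_
    set t := (‖h‖ + 1) / ε
    have ht : 0 < t := by positivity
    have hft : f + t⁻¹ • h ∈ ball f ε := by
      rw [mem_ball, dist_eq_norm, add_sub_cancel_left, norm_smul, norm_inv, Real.norm_eq_abs,
        abs_of_pos ht, inv_div, div_mul_eq_mul_div, div_lt_iff₀ (by positivity)]
      nlinarith
    obtain ⟨N, hN⟩ := interior_subset (hball hft)
    obtain ⟨m, hm⟩ := exists_nat_ge (t + |M| + t * |N| + 1)
    refine ⟨m, fun x hx => ?_⟩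
    have htN : t * f x + h x ≤ t * N := by
      have := mul_le_mul_of_nonneg_left (hN x hx) ht.le
      rwa [add_apply, smul_apply, smul_eq_mul, mul_add,
        mul_inv_cancel_left₀ ht.ne'] at this
    have htN' : 0 ≤ t * |N| := by positivity
    have hmt : 0 ≤ (m : ℝ) - t := by linarith [abs_nonneg M]
    calc (m : ℝ) * f x + h x = (m - t) * f x + (t * f x + h x) := by ring
      _ ≤ (m - t) * |M| + t * |N| := by
          gcongr
          · exact (hM x hx).trans (le_abs_self M)
          · exact htN.trans (by gcongr; exact le_abs_self N)
      _ ≤ m * (|M| + t * |N| + 1) := by nlinarith [abs_nonneg M]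
      _ ≤ (m : ℝ) ^ 2 := by rw [sq]; gcongr; linarith
  obtain ⟨m, h₀, hh₀⟩ := nonempty_interior_of_iUnion_of_closed hB_closed hB_cover
  obtain ⟨δ, hδ, hδball⟩ := isOpen_iff.1 isOpen_interior h₀ hh₀
  refine ⟨(m : ℝ) • f + h₀, δ, hδ, (m : ℝ) ^ 2, fun h hh x hx => ?_⟩
  have hhB : h - (m : ℝ) • f ∈ B m := interior_subset <| hδball <| by
    rwa [mem_ball, dist_eq_norm, sub_sub, ← dist_eq_norm, ← mem_ball]
  simpa using hhB x hx

lemma add_mul_norm_le_of_forall_mem_ball_apply_le {C : Set X} {g : X →L[ℝ] ℝ}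
    {δ b : ℝ} (hδ : 0 < δ) (hg : ∀ h ∈ ball g δ, ∀ x ∈ C, h x ≤ b) :
    ∀ x ∈ C, g x + δ / 2 * ‖x‖ ≤ b := by
  intro x hx
  rcases eq_or_ne x 0 with rfl | hx0
  · simpa using hg g (mem_ball_self hδ) 0 hx
  obtain ⟨k, hk, hkx⟩ := exists_dual_vector ℝ x (norm_ne_zero_iff.2 hx0)
  have hgk : g + (δ / 2) • k ∈ ball g δ := by
    rw [mem_ball, dist_eq_norm, add_sub_cancel_left, norm_smul, hk, Real.norm_eq_abs,
      abs_of_pos (half_pos hδ)]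
    linarith
  simpa [hkx] using hg _ hgk x hx

lemma exists_subseq_tendsto_neg_of_add_mul_norm_le {C : Set X} {c : ℕ → X}
    (hmem : ∀ n, c n ∈ C) (hnorm : Tendsto (fun n => ‖c n‖) atTop atTop) {g : X →L[ℝ] ℝ}
    {δ b : ℝ} (hδ : 0 < δ) (hC : ∀ x ∈ C, g x + δ * ‖x‖ ≤ b) :
    ∃ φ : ℕ → ℕ, StrictMono φ ∧ ∃ a < (0 : ℝ),
      Tendsto (fun k => g (‖c (φ k)‖⁻¹ • c (φ k))) atTop (𝓝 a) := by
  have hbdd : ∀ n, g (‖c n‖⁻¹ • c n) ∈ Set.Icc (-‖g‖) ‖g‖ := fun n =>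
    abs_le.1 <| (g.le_opNorm _).trans <|
      mul_le_of_le_one_right (norm_nonneg g) (norm_inv_norm_smul_le (c n))
  obtain ⟨a, -, φ, hφ, ha⟩ := tendsto_subseq_of_bounded (isBounded_Icc _ _) hbdd
  have hcφ : Tendsto (fun k => ‖c (φ k)‖) atTop atTop := hnorm.comp hφ.tendsto_atTop
  have hupper : ∀ᶠ k in atTop, g (‖c (φ k)‖⁻¹ • c (φ k)) ≤ b / ‖c (φ k)‖ - δ := by
    filter_upwards [hcφ.eventually_gt_atTop 0] with k hk
    rw [map_smul, smul_eq_mul, inv_mul_le_iff₀ hk, mul_sub, mul_div_cancel₀ _ hk.ne']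
    linarith [hC _ (hmem (φ k))]
  have hlim : Tendsto (fun k => b / ‖c (φ k)‖ - δ) atTop (𝓝 (-δ)) := by
    simpa using (tendsto_const_nhds.div_atTop hcφ).sub_const δ
  exact ⟨φ, hφ, a, (le_of_tendsto_of_tendsto ha hlim hupper).trans_lt (neg_neg_of_pos hδ), ha⟩

end

theorem statement6_general {X : Type*} [NormedAddCommGroup X] [NormedSpace ℝ X]
    (C : Set X) (hconv : Convex ℝ C)
    (c : ℕ → X) (hmem : ∀ n, c n ∈ C)
    (hnorm : Tendsto (fun n => ‖c n‖) atTop atTop)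
    (hcond :
      (CompleteSpace X ∧ Function.Surjective (NormedSpace.inclusionInDoubleDual ℝ X) ∧
        (interior (barrierCone C)).Nonempty) ∨
      (∃ c₀ ∈ C, ∃ r > (0 : ℝ), IsCompact (C ∩ Metric.closedBall c₀ r)) ∨
      (∃ r > (0 : ℝ), ∃ Z : Submodule ℝ X, FiniteDimensional ℝ Z ∧
        C ⊆ Metric.ball (0 : X) r + (Z : Set X))) :
    ∃ φ : ℕ → ℕ, StrictMono φ ∧ ∃ xs : X →L[ℝ] ℝ, ‖xs‖ = 1 ∧ ∃ ρ > (0 : ℝ),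
      Tendsto (fun k => xs (‖c (φ k)‖⁻¹ • c (φ k))) atTop (nhds (-ρ)) := by
  rcases hcond with ⟨-, -, hint⟩ | hcompact
  · obtain ⟨g, δ, hδ, b, hg⟩ := exists_uniform_bound_on_ball_of_interior_barrierCone_nonempty hint
    obtain ⟨φ, hφ, a, ha, hlim⟩ := exists_subseq_tendsto_neg_of_add_mul_norm_le hmem hnorm
      (half_pos hδ) (add_mul_norm_le_of_forall_mem_ball_apply_le hδ hg)
    exact ⟨φ, hφ, exists_norm_eq_one_tendsto_neg_of_tendsto_neg g ha hlim⟩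
  obtain ⟨φ, hφ, u, hu⟩ : ∃ φ : ℕ → ℕ, StrictMono φ ∧ ∃ u : X,
      Tendsto (fun k => ‖c (φ k)‖⁻¹ • c (φ k)) atTop (𝓝 u) := by
    rcases hcompact with ⟨c₀, hc₀, r, hr, hK⟩ | ⟨r, -, Z, hZ, hsub⟩
    · exact exists_subseq_tendsto_inv_norm_smul_of_isCompact_inter_closedBall hconv hmem hnorm
        hc₀ hr hK
    · exact exists_subseq_tendsto_inv_norm_smul_of_subset_ball_add hmem hnorm hsub
  exact ⟨φ, hφ, exists_norm_eq_one_tendsto_neg_of_tendsto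
    (norm_eq_one_of_tendsto_inv_norm_smul (hnorm.comp hφ.tendsto_atTop) hu) hu⟩

/-- Let `C` be a nonempty closed convex subset of a real normed space `X` and
`(c_n) ⊆ C` with `‖c_n‖ → ∞`. If one of the conditions
(A) `X` is a reflexive Banach space and `Int barc(C) ≠ ∅`,
(B) `C` is locally compact,
(C) `C ⊆ B(0; r) + Z` for some `r > 0` and finite-dimensional subspace `Z`,
holds, then some subsequence `(c_{n_k})` satisfies `⟨x*₀, c_{n_k}/‖c_{n_k}‖⟩ → -ρ` for some
norm-one functional `x*₀` and some `ρ > 0`. -/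
theorem statement6 {X : Type*} [NormedAddCommGroup X] [NormedSpace ℝ X]
    (C : Set X) (hne : C.Nonempty) (hcl : IsClosed C) (hconv : Convex ℝ C)
    (c : ℕ → X) (hmem : ∀ n, c n ∈ C)
    (hnorm : Tendsto (fun n => ‖c n‖) atTop atTop)
    (hcond :
      (CompleteSpace X ∧ Function.Surjective (NormedSpace.inclusionInDoubleDual ℝ X) ∧
        (interior (barrierCone C)).Nonempty) ∨
      (∃ c₀ ∈ C, ∃ r > (0 : ℝ), IsCompact (C ∩ Metric.closedBall c₀ r)) ∨
      (∃ r > (0 : ℝ), ∃ Z : Submodule ℝ X, FiniteDimensional ℝ Z ∧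
        C ⊆ Metric.ball (0 : X) r + (Z : Set X))) :
    ∃ φ : ℕ → ℕ, StrictMono φ ∧ ∃ xs : X →L[ℝ] ℝ, ‖xs‖ = 1 ∧ ∃ ρ > (0 : ℝ),
      Tendsto (fun k => xs (‖c (φ k)‖⁻¹ • c (φ k))) atTop (nhds (-ρ)) :=
  statement6_general C hconv c hmem hnorm hcond
end

section
/- Let C be a nonempty unbounded closed convex subset of a real normed linear space X such that the closure of the affine hull of C is not equal to X. Then barc(C) ≠ Int barc(C) ∪ {0}; that is, there exists a nonzero x* ∈ barc(C) that does not belong to the interior of barc(C). -/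
open Set Filter Topology Bornology

theorem LinearMap.apply_eq_of_bddAbove_affineSubspace {X : Type*} [AddCommGroup X] [Module ℝ X]
    (f : X →ₗ[ℝ] ℝ) {A : AffineSubspace ℝ X} {b : ℝ} (hf : ∀ p ∈ A, f p ≤ b)
    {p q : X} (hp : p ∈ A) (hq : q ∈ A) : f p = f q := by
  by_contra hne
  have hd : f q - f p ≠ 0 := sub_ne_zero.mpr (Ne.symm hne)
  set t := (b + 1 - f p) / (f q - f p)
  have hval : f (t • (q -ᵥ p) +ᵥ p) = b + 1 := by
    simp only [vsub_eq_sub, vadd_eq_add, map_add, map_smul, map_sub, smul_eq_mul, t,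
      div_mul_cancel₀ _ hd]
    ring
  have := hf _ (AffineSubspace.smul_vsub_vadd_mem _ t hq hp hp)
  linarith

section NormedSpace

variable {X : Type*} [NormedAddCommGroup X] [NormedSpace ℝ X]

theorem exists_ne_zero_forall_apply_eq_of_closure_affineSpan_ne_univ {C : Set X}
    (hC : C.Nonempty) (haff : closure (affineSpan ℝ C : Set X) ≠ univ) :
    ∃ f : StrongDual ℝ X, f ≠ 0 ∧ ∃ a, ∀ c ∈ C, f c = a := by
  obtain ⟨x₀, hx₀⟩ := hC
  obtain ⟨z, hz⟩ := (ne_univ_iff_exists_notMem _).mp haff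
  obtain ⟨f, u, hfu, hzu⟩ :=
    geometric_hahn_banach_closed_point (affineSpan ℝ C).convex.closure isClosed_closure hz
  have hfA : ∀ p ∈ affineSpan ℝ C, (f : X →ₗ[ℝ] ℝ) p ≤ u :=
    fun p hp ↦ (hfu p (subset_closure hp)).le
  refine ⟨f, ?_, f x₀, fun c hc ↦ (f : X →ₗ[ℝ] ℝ).apply_eq_of_bddAbove_affineSubspace
    hfA (subset_affineSpan ℝ C hc) (subset_affineSpan ℝ C hx₀)⟩
  rintro rfl
  have := hfu x₀ (subset_closure (subset_affineSpan ℝ C hx₀))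
  simp only [zero_apply] at this hzu
  linarith

theorem isBounded_of_forall_bddAbove_image {C : Set X}
    (hC : ∀ f : StrongDual ℝ X, BddAbove (f '' C)) : IsBounded C := by
  have hpointwise : ∀ f : StrongDual ℝ X,
      ∃ B, ∀ c : C, ‖NormedSpace.inclusionInDoubleDual ℝ X c f‖ ≤ B := by
    intro f
    obtain ⟨b₁, hb₁⟩ := hC f
    obtain ⟨b₂, hb₂⟩ := hC (-f)
    refine ⟨max b₁ b₂, fun c ↦ ?_⟩
    have h₁ := hb₁ (mem_image_of_mem f c.2)
    have h₂ := hb₂ (mem_image_of_mem (-f) c.2)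
    rw [neg_apply] at h₂
    rw [NormedSpace.dual_def, Real.norm_eq_abs, abs_le]
    constructor <;> linarith [le_max_left b₁ b₂, le_max_right b₁ b₂]
  obtain ⟨B, hB⟩ := banach_steinhaus hpointwise
  refine isBounded_iff_forall_norm_le.mpr ⟨B, fun x hx ↦ ?_⟩
  rw [← (NormedSpace.inclusionInDoubleDualLi ℝ (E := X)).norm_map x]
  exact hB ⟨x, hx⟩

namespace barrierCone

variable {C : Set X} {f g : StrongDual ℝ X}

theorem mem_iff_bddAbove_image : f ∈ barrierCone C ↔ BddAbove (f '' C) := by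
  simp [barrierCone, BddAbove, upperBounds, Set.Nonempty]

theorem add_mem (hf : f ∈ barrierCone C) (hg : g ∈ barrierCone C) :
    f + g ∈ barrierCone C := by
  obtain ⟨a, ha⟩ := hf
  obtain ⟨b, hb⟩ := hg
  exact ⟨a + b, fun c hc ↦ add_le_add (ha c hc) (hb c hc)⟩

theorem smul_mem {t : ℝ} (ht : 0 ≤ t) (hf : f ∈ barrierCone C) :
    t • f ∈ barrierCone C := by
  obtain ⟨a, ha⟩ := hf
  exact ⟨t * a, fun c hc ↦ mul_le_mul_of_nonneg_left (ha c hc) ht⟩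

theorem eq_univ_of_mem_interior_of_neg_mem (hf : f ∈ interior (barrierCone C))
    (hnf : -f ∈ barrierCone C) : barrierCone C = univ := by
  refine eq_univ_of_forall fun g ↦ ?_
  have hnear : ∀ᶠ s in 𝓝[>] (0 : ℝ), f + s • g ∈ barrierCone C := by
    have hcont : Continuous fun s : ℝ ↦ f + s • g := by fun_prop
    exact nhdsWithin_le_nhds (hcont.tendsto' 0 f (by simp) (mem_interior_iff_mem_nhds.mp hf))
  obtain ⟨s, hs, hpos⟩ := (hnear.and self_mem_nhdsWithin).exists
  have hsg : s • g ∈ barrierCone C := by simpa using add_mem hs hnf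
  simpa [smul_smul, inv_mul_cancel₀ (ne_of_gt hpos)] using smul_mem (inv_nonneg.mpr hpos.le) hsg

end barrierCone

end NormedSpace

theorem statement8_general {X : Type*} [NormedAddCommGroup X] [NormedSpace ℝ X]
    (C : Set X)
    (hunbdd : ¬ Bornology.IsBounded C)
    (haff : closure ((affineSpan ℝ C : AffineSubspace ℝ X) : Set X) ≠ Set.univ) :
    barrierCone C ≠ interior (barrierCone C) ∪ {0} := by
  intro heq
  obtain ⟨f, hf₀, a, hfa⟩ := exists_ne_zero_forall_apply_eq_of_closure_affineSpan_ne_univ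
    (nonempty_of_not_isBounded hunbdd) haff
  have hf : f ∈ barrierCone C := ⟨a, fun c hc ↦ (hfa c hc).le⟩
  have hnf : -f ∈ barrierCone C := ⟨-a, fun c hc ↦ by simp [hfa c hc]⟩
  have hint : f ∈ interior (barrierCone C) := by
    rcases heq ▸ hf with h | h
    · exact h
    · exact absurd h hf₀
  have huniv := barrierCone.eq_univ_of_mem_interior_of_neg_mem hint hnf
  exact hunbdd <| isBounded_of_forall_bddAbove_image fun g ↦
    barrierCone.mem_iff_bddAbove_image.mp (huniv ▸ mem_univ g)

/-- If `C` is a nonempty unbounded closed convex subset of a real normed space `X`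
with `closure (aff C) ≠ X`, then `barc(C) ≠ Int barc(C) ∪ {0}`. -/
theorem statement8 {X : Type*} [NormedAddCommGroup X] [NormedSpace ℝ X]
    (C : Set X) (hne : C.Nonempty) (hcl : IsClosed C) (hconv : Convex ℝ C)
    (hunbdd : ¬ Bornology.IsBounded C)
    (haff : closure ((affineSpan ℝ C : AffineSubspace ℝ X) : Set X) ≠ Set.univ) :
    barrierCone C ≠ interior (barrierCone C) ∪ {0} :=
  statement8_general C hunbdd haff
end

section
/- Let X be an infinite-dimensional real Hilbert space and let C ⊆ X be a nonempty unbounded closed convex subset that is locally compact. Then C does not have the strong separation property; i.e. there exists a nonempty closed convex set D ⊆ X disjoint from C such that no x* ∈ X* \ {0} satisfies sup{⟨x*, c⟩ : c ∈ C} < inf{⟨x*, d⟩ : d ∈ D}. -/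
/-!
Fix `c₀ ∈ C` with a compact slice `C ∩ closedBall c₀ r`. Compactness of the slice and
unboundedness of `C` give a ray `c₀ + t • v ∈ C`, `t ≥ 0`. The union of the planes
`span {c - c₀, v}`, `c ∈ C`, is σ-compact, since each of them is already spanned by a point of
the slice; by Baire and Riesz it is not the whole infinite-dimensional space, so pick `w` outside
it. Then `c₀ + span {v, w}` meets `C` only on the line `c₀ + ℝ v`, and the image of the region
`{s, t ≥ 0, s * t ≥ 1}` under `(s, t) ↦ c₀ + s • v + t • w` is closed, convex, disjoint from `C` and
asymptotic to the ray, so no functional strongly separates it from `C`.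
-/

open Set Metric Filter Topology

theorem FiniteDimensional.of_isSigmaCompact_univ (𝕜 : Type*) {E : Type*}
    [NontriviallyNormedField 𝕜] [CompleteSpace 𝕜] [NormedAddCommGroup E] [NormedSpace 𝕜 E]
    [CompleteSpace E] (h : IsSigmaCompact (univ : Set E)) : FiniteDimensional 𝕜 E := by
  obtain ⟨K, hK, hcover⟩ := h
  obtain ⟨n, x, hx⟩ := nonempty_interior_of_iUnion_of_closed (fun n => (hK n).isClosed) hcover
  exact .of_totallyBounded_nhds (𝕜 := 𝕜) (mem_interior_iff_mem_nhds.1 hx) (hK n).totallyBounded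

def hyperbolicRegion : Set (ℝ × ℝ) := {p | 0 ≤ p.1 ∧ 0 ≤ p.2 ∧ 1 ≤ p.1 * p.2}

theorem isClosed_hyperbolicRegion : IsClosed hyperbolicRegion :=
  (isClosed_le continuous_const continuous_fst).inter <|
    (isClosed_le continuous_const continuous_snd).inter <|
      isClosed_le continuous_const (continuous_fst.mul continuous_snd)

theorem pos_of_mem_hyperbolicRegion {p : ℝ × ℝ} (hp : p ∈ hyperbolicRegion) :
    0 < p.1 ∧ 0 < p.2 :=
  have hprod : 0 < p.1 * p.2 := by linarith [hp.2.2]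
  ⟨pos_of_mul_pos_left hprod hp.2.1, pos_of_mul_pos_right hprod hp.1⟩

theorem convex_hyperbolicRegion : Convex ℝ hyperbolicRegion := by
  have : hyperbolicRegion = {p : ℝ × ℝ | p.1 ∈ Ioi 0 ∧ p.1 ^ (-1 : ℤ) ≤ p.2} := by
    ext p
    simp only [mem_ofPred_eq, mem_Ioi, zpow_neg_one]
    constructor
    · intro hp
      have hp1 := (pos_of_mem_hyperbolicRegion hp).1
      exact ⟨hp1, (inv_le_iff_one_le_mul₀' hp1).2 hp.2.2⟩
    · rintro ⟨hp1, hp2⟩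
      exact ⟨hp1.le, (inv_pos.2 hp1).le.trans hp2, (inv_le_iff_one_le_mul₀' hp1).1 hp2⟩
  rw [this]
  exact (convexOn_zpow (𝕜 := ℝ) (-1)).convex_epigraph

section

variable {X : Type*} [NormedAddCommGroup X] [NormedSpace ℝ X] {C : Set X} {c₀ v w : X}

theorem exists_ray_subset_of_not_isBounded (hC : Convex ℝ C) (hCcl : IsClosed C)
    (hunb : ¬ Bornology.IsBounded C) (hc₀ : c₀ ∈ C) {r : ℝ} (hr : 0 < r)
    (hK : IsCompact (C ∩ closedBall c₀ r)) :
    ∃ v : X, v ≠ 0 ∧ ∀ t : ℝ, 0 ≤ t → c₀ + t • v ∈ C := by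
  set T : ℕ → Set X := fun n => {u | ‖u‖ = r ∧ ∀ t ∈ Icc (0 : ℝ) (n + 1), c₀ + t • u ∈ C}
  have hanti : ∀ n, T (n + 1) ⊆ T n := fun n u ⟨hu, hseg⟩ =>
    ⟨hu, fun t ht => hseg t ⟨ht.1, by push_cast; linarith [ht.2]⟩⟩
  have hclosed : ∀ n, IsClosed (T n) := fun n => by
    simp only [T, ofPred_and, ofPred_forall]
    exact (isClosed_eq continuous_norm continuous_const).inter
      (isClosed_iInter fun t => isClosed_iInter fun _ => hCcl.preimage (by fun_prop))
  have hcompact : IsCompact (T 0) := by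
    refine ((Homeomorph.addLeft c₀).isCompact_preimage.2 hK).of_isClosed_subset (hclosed 0) ?_
    rintro u ⟨hu, hseg⟩
    refine ⟨by simpa using hseg 1 ⟨zero_le_one, by simp⟩, ?_⟩
    simp [hu]
  have hnonempty : ∀ n, (T n).Nonempty := by
    intro n
    obtain ⟨c, hc, hfar⟩ : ∃ c ∈ C, (n + 1) * r < ‖c - c₀‖ := by
      by_contra! h
      exact hunb ((isBounded_iff_subset_closedBall c₀).2 ⟨_, fun c hc => by
        simpa [dist_eq_norm] using h c hc⟩)
    have hpos : 0 < ‖c - c₀‖ := by linarith [mul_pos (by positivity : (0 : ℝ) < n + 1) hr]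
    refine ⟨(r / ‖c - c₀‖) • (c - c₀), ?_, fun t ht => ?_⟩
    · rw [norm_smul, Real.norm_of_nonneg (by positivity), div_mul_cancel₀ _ hpos.ne']
    · rw [smul_smul, mul_div_assoc']
      exact hC.add_smul_sub_mem hc₀ hc ⟨by have := ht.1; positivity,
        div_le_one_of_le₀ (by nlinarith [ht.2]) (norm_nonneg _)⟩
  obtain ⟨u, hu⟩ := hcompact.nonempty_iInter_of_sequence_nonempty_isCompact_isClosed T hanti
    hnonempty hclosed
  rw [mem_iInter] at hu
  refine ⟨u, norm_ne_zero_iff.1 ((hu 0).1.symm ▸ hr.ne'), fun t ht => (hu ⌈t⌉₊).2 t ⟨ht, ?_⟩⟩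
  linarith [Nat.le_ceil t]

theorem isSigmaCompact_biUnion_span_pair (hC : Convex ℝ C) (hc₀ : c₀ ∈ C) {r : ℝ} (hr : 0 < r)
    (hK : IsCompact (C ∩ closedBall c₀ r)) (v : X) :
    IsSigmaCompact (⋃ c ∈ C, (Submodule.span ℝ {c - c₀, v} : Set X)) := by
  have : CompactSpace ↥(C ∩ closedBall c₀ r) := isCompact_iff_compactSpace.1 hK
  convert isSigmaCompact_range (X := ℝ × ↥(C ∩ closedBall c₀ r) × ℝ)
    (f := fun p => p.1 • ((p.2.1 : X) - c₀) + p.2.2 • v) (by fun_prop)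
  ext x
  simp only [mem_iUnion, SetLike.mem_coe, Submodule.mem_span_pair, mem_range, Prod.exists,
    Subtype.exists, mem_inter_iff, exists_prop]
  constructor
  · rintro ⟨c, hc, s, t, rfl⟩
    set ε := r / (r + ‖c - c₀‖)
    have hε : 0 < ε := by positivity
    refine ⟨s / ε, c₀ + ε • (c - c₀), ⟨?_, ?_⟩, t, ?_⟩
    · exact hC.add_smul_sub_mem hc₀ hc ⟨hε.le, div_le_one_of_le₀ (by simp) (by positivity)⟩
    · rw [mem_closedBall, dist_eq_norm, add_sub_cancel_left, norm_smul, Real.norm_of_nonneg hε.le,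
        div_mul_eq_mul_div, div_le_iff₀ (by positivity)]
      nlinarith [norm_nonneg (c - c₀)]
    · rw [add_sub_cancel_left, smul_smul, div_mul_cancel₀ _ hε.ne']
  · rintro ⟨s, c, ⟨hc, -⟩, t, rfl⟩
    exact ⟨c, hc, s, t, rfl⟩

theorem exists_not_stronglySeparated_of_ray (hvw : LinearIndependent ℝ ![v, w])
    (hray : ∀ t : ℝ, 0 ≤ t → c₀ + t • v ∈ C)
    (hmiss : ∀ s t : ℝ, 0 < t → c₀ + s • v + t • w ∉ C) :
    ∃ D : Set X, D.Nonempty ∧ IsClosed D ∧ Convex ℝ D ∧ Disjoint C D ∧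
      ¬ StronglySeparated C D := by
  set L : ℝ × ℝ →ₗ[ℝ] X := (LinearMap.fst ℝ ℝ ℝ).smulRight v + (LinearMap.snd ℝ ℝ ℝ).smulRight w
  have hL : ∀ p : ℝ × ℝ, L p = p.1 • v + p.2 • w := fun p => rfl
  have hLinj : LinearMap.ker L = ⊥ := by
    refine LinearMap.ker_eq_bot'.2 fun p hp => ?_
    obtain ⟨h1, h2⟩ := LinearIndependent.pair_iff.1 hvw p.1 p.2 (by rwa [hL] at hp)
    exact Prod.ext h1 h2
  have hemb : IsClosedEmbedding fun p => c₀ + L p :=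
    (Homeomorph.addLeft c₀).isClosedEmbedding.comp (L.isClosedEmbedding_of_injective hLinj)
  refine ⟨(fun p => c₀ + L p) '' hyperbolicRegion,
    ⟨_, (1, 1), ⟨zero_le_one, zero_le_one, by norm_num⟩, rfl⟩,
    hemb.isClosedMap _ isClosed_hyperbolicRegion,
    by simpa only [image_image] using (convex_hyperbolicRegion.linear_image L).translate c₀, ?_, ?_⟩
  · rw [disjoint_right]
    rintro _ ⟨p, hp, rfl⟩
    simpa [hL, add_assoc] using hmiss p.1 p.2 (pos_of_mem_hyperbolicRegion hp).2
  · rintro ⟨φ, -, a, b, hab, hC, hD⟩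
    have hgap : ∀ t : ℝ, 0 < t → b - a ≤ t⁻¹ * φ w := by
      intro t ht
      have h1 := hC _ (hray t ht.le)
      have h2 := hD (c₀ + L (t, t⁻¹)) ⟨_, ⟨ht.le, (inv_pos.2 ht).le, by simp [ht.ne']⟩, rfl⟩
      simp only [hL, map_add, map_smul, smul_eq_mul] at h1 h2
      linarith
    have hlim : Tendsto (fun t : ℝ => t⁻¹ * φ w) atTop (𝓝 0) := by
      simpa using tendsto_inv_atTop_zero.mul_const (φ w)
    have hba : b - a ≤ 0 := ge_of_tendsto hlim ((eventually_gt_atTop 0).mono hgap)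
    linarith

end

theorem statement11_general {X : Type*} [NormedAddCommGroup X] [InnerProductSpace ℝ X]
    [CompleteSpace X] (hinf : ¬ FiniteDimensional ℝ X)
    (C : Set X) (hcl : IsClosed C) (hconv : Convex ℝ C)
    (hunbdd : ¬ Bornology.IsBounded C)
    (hloc : ∃ c₀ ∈ C, ∃ r > (0 : ℝ), IsCompact (C ∩ Metric.closedBall c₀ r)) :
    ∃ D : Set X, D.Nonempty ∧ IsClosed D ∧ Convex ℝ D ∧ Disjoint C D ∧
      ¬ StronglySeparated C D := by
  obtain ⟨c₀, hc₀, r, hr, hK⟩ := hloc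
  obtain ⟨v, hv, hray⟩ := exists_ray_subset_of_not_isBounded hconv hcl hunbdd hc₀ hr hK
  obtain ⟨w, hw⟩ : (⋃ c ∈ C, (Submodule.span ℝ {c - c₀, v} : Set X))ᶜ.Nonempty := by
    rw [nonempty_compl]
    intro h
    exact hinf (.of_isSigmaCompact_univ ℝ (h ▸ isSigmaCompact_biUnion_span_pair hconv hc₀ hr hK v))
  simp only [mem_compl_iff, mem_iUnion, SetLike.mem_coe, Submodule.mem_span_pair, not_exists]
    at hw
  refine exists_not_stronglySeparated_of_ray (w := w) ?_ hray fun s t ht hst => ?_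
  · exact (LinearIndependent.pair_iff' hv).2 fun a ha => hw c₀ hc₀ 0 a (by simp [ha])
  · refine hw _ hst t⁻¹ (-(s / t)) ?_
    match_scalars <;> field_simp [ht.ne'] <;> ring

/-- In an infinite-dimensional real Hilbert space, a nonempty unbounded closed
convex locally compact set `C` does not have the strong separation property: some nonempty
closed convex set `D` disjoint from `C` cannot be strongly separated from `C`. -/
theorem statement11 {X : Type*} [NormedAddCommGroup X] [InnerProductSpace ℝ X]
    [CompleteSpace X] (hinf : ¬ FiniteDimensional ℝ X)
    (C : Set X) (hne : C.Nonempty) (hcl : IsClosed C) (hconv : Convex ℝ C)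
    (hunbdd : ¬ Bornology.IsBounded C)
    (hloc : ∃ c₀ ∈ C, ∃ r > (0 : ℝ), IsCompact (C ∩ Metric.closedBall c₀ r)) :
    ∃ D : Set X, D.Nonempty ∧ IsClosed D ∧ Convex ℝ D ∧ Disjoint C D ∧
      ¬ StronglySeparated C D :=
  statement11_general hinf C hcl hconv hunbdd hloc
end

section
/- Let X be a finite-dimensional real normed linear space and let C ⊆ X be a nonempty closed convex set. Then C has the strong separation property if and only if barc(C) = Int barc(C) ∪ {0}. Furthermore, if C is unbounded and has the strong separation property, then the interior of C is nonempty. -/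
/-- `C` has the strong separation property. -/
def StrongSepProperty {X : Type*} [NormedAddCommGroup X] [NormedSpace ℝ X]
    (C : Set X) : Prop :=
  ∀ D : Set X, D.Nonempty → IsClosed D → Convex ℝ D → Disjoint C D → StronglySeparated C D

open Filter Topology Set Pointwise Bornology AffineSpace

section NormedSpace

variable {X : Type*} [NormedAddCommGroup X] [NormedSpace ℝ X]

lemma zero_mem_barrierCone (C : Set X) : (0 : X →L[ℝ] ℝ) ∈ barrierCone C :=
  ⟨0, fun _ _ => le_rfl⟩

lemma StronglySeparated.zero_notMem_closure_sub {C D : Set X} (h : StronglySeparated C D) :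
    (0 : X) ∉ closure (C - D) := by
  obtain ⟨f, -, a, b, hab, hC, hD⟩ := h
  have hsub : closure (C - D) ⊆ {x | f x ≤ a - b} := by
    refine closure_minimal ?_ (isClosed_le f.continuous continuous_const)
    rintro _ ⟨c, hc, d, hd, rfl⟩
    simp only [mem_ofPred_eq, map_sub]
    linarith [hC c hc, hD d hd]
  intro h0
  have : (0 : ℝ) ≤ a - b := by simpa using hsub h0
  linarith

lemma stronglySeparated_of_zero_notMem_closure_sub {C D : Set X} (hC : Convex ℝ C)
    (hD : Convex ℝ D) (hCne : C.Nonempty) (hDne : D.Nonempty) (h0 : (0 : X) ∉ closure (C - D)) :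
    StronglySeparated C D := by
  obtain ⟨f, u, hfu, hu⟩ :=
    geometric_hahn_banach_closed_point (hC.sub hD).closure isClosed_closure h0
  rw [map_zero] at hu
  have hgap : ∀ c ∈ C, ∀ d ∈ D, f c - u < f d := fun c hc d hd => by
    have := hfu _ (subset_closure (sub_mem_sub hc hd))
    rw [map_sub] at this
    linarith
  obtain ⟨c₀, hc₀⟩ := hCne
  obtain ⟨d₀, hd₀⟩ := hDne
  have hf0 : f ≠ 0 := by
    rintro rfl
    have := hgap c₀ hc₀ d₀ hd₀
    simp only [zero_apply] at this
    linarith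
  have hbdd : BddAbove (f '' C) := ⟨f d₀ + u, by
    rintro _ ⟨c, hc, rfl⟩
    linarith [hgap c hc d₀ hd₀]⟩
  refine ⟨f, hf0, sSup (f '' C), sSup (f '' C) - u, by linarith,
    fun c hc => le_csSup hbdd ⟨c, hc, rfl⟩, fun d hd => ?_⟩
  have : sSup (f '' C) ≤ f d + u := csSup_le ⟨_, c₀, hc₀, rfl⟩ <| by
    rintro _ ⟨c, hc, rfl⟩
    linarith [hgap c hc d hd]
  linarith

lemma mem_asymptoticCone_of_tendsto {ι : Type*} {l : Filter ι} [l.NeBot] {s : Set X}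
    {y : ι → X} {r : ι → ℝ} {v : X} (hr : Tendsto r l atTop)
    (hv : Tendsto (fun i => (r i)⁻¹ • y i) l (𝓝 v)) (hy : ∀ᶠ i in l, y i ∈ s) :
    v ∈ asymptoticCone ℝ s := by
  have hy' : Tendsto y l (asymptoticNhds ℝ X v) := by
    refine (hr.atTop_smul_nhds_tendsto_asymptoticNhds hv).congr' ?_
    filter_upwards [hr.eventually_gt_atTop 0] with i hi
    exact smul_inv_smul₀ hi.ne' _
  exact hy'.frequently hy.frequently

lemma apply_nonpos_of_mem_asymptoticCone {s : Set X} {f : X →L[ℝ] ℝ} (hf : f ∈ barrierCone s)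
    {v : X} (hv : v ∈ asymptoticCone ℝ s) : f v ≤ 0 := by
  obtain ⟨b, hb⟩ := hf
  by_contra! hfv
  rw [mem_asymptoticCone_iff, asymptoticNhds_eq_smul, ← map₂_smul, ← map_prod_eq_map₂,
    frequently_map] at hv
  have hlarge : ∀ᶠ p : ℝ × X in atTop ×ˢ 𝓝 v, b < f (p.1 • p.2) := by
    have hnear : ∀ᶠ u in 𝓝 v, f v / 2 < f u :=
      f.continuous.continuousAt.eventually (lt_mem_nhds (half_lt_self hfv))
    filter_upwards [tendsto_fst.eventually (eventually_gt_atTop (max 0 (2 * b / f v))),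
      tendsto_snd.eventually hnear] with ⟨t, u⟩ (ht : max 0 (2 * b / f v) < t)
      (hu : f v / 2 < f u)
    rw [max_lt_iff, div_lt_iff₀ hfv] at ht
    rw [map_smul, smul_eq_mul]
    nlinarith
  obtain ⟨⟨t, u⟩, hts, htb⟩ := (hv.and_eventually hlarge).exists
  exact (hb _ hts).not_gt htb

lemma apply_neg_of_mem_interior_barrierCone {s : Set X} {f : X →L[ℝ] ℝ}
    (hf : f ∈ interior (barrierCone s)) {v : X} (hv : v ∈ asymptoticCone ℝ s) (hv0 : v ≠ 0) :
    f v < 0 := by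
  obtain ⟨g, hg⟩ := SeparatingDual.exists_eq_one (R := ℝ) hv0
  have hpert : Tendsto (fun ε : ℝ => f + ε • g) (𝓝[>] 0) (𝓝 f) :=
    ((continuous_const.add (continuous_id.smul continuous_const)).tendsto' 0 f
      (by simp)).mono_left nhdsWithin_le_nhds
  obtain ⟨ε, hεs, hε⟩ :=
    ((hpert.eventually (mem_interior_iff_mem_nhds.1 hf)).and self_mem_nhdsWithin).exists
  have := apply_nonpos_of_mem_asymptoticCone hεs hv
  simp only [add_apply, smul_apply, hg, smul_eq_mul, mul_one] at this
  linarith [show 0 < ε from hε]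

lemma exists_mem_le_norm_of_notMem_interior_barrierCone {C : Set X} {f : X →L[ℝ] ℝ}
    (hf : f ∈ barrierCone C) (hfi : f ∉ interior (barrierCone C)) {ε : ℝ} (hε : 0 < ε) (R : ℝ) :
    ∃ c ∈ C, R ≤ ‖c‖ ∧ -(ε * ‖c‖) ≤ f c := by
  obtain ⟨s, hs⟩ := hf
  obtain ⟨g, hg, hgC⟩ := not_subset.1 fun h : Metric.ball f ε ⊆ barrierCone C =>
    hfi (mem_interior.2 ⟨_, h, Metric.isOpen_ball, Metric.mem_ball_self hε⟩)
  obtain ⟨c, hc, hgc⟩ : ∃ c ∈ C, max 0 (s + ε * R) < g c := by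
    by_contra! h
    exact hgC ⟨_, h⟩
  rw [max_lt_iff] at hgc
  have hgf : g c - f c ≤ ε * ‖c‖ := calc
    g c - f c = (g - f) c := rfl
    _ ≤ ‖g - f‖ * ‖c‖ := (le_abs_self _).trans ((g - f).le_opNorm c)
    _ ≤ ε * ‖c‖ := by gcongr; exact (mem_ball_iff_norm.1 hg).le
  refine ⟨c, hc, le_of_mul_le_mul_left ?_ hε, by linarith⟩
  linarith [hs c hc]

lemma ContinuousLinearMap.exists_apply_eq_one {f : X →L[ℝ] ℝ} (hf : f ≠ 0) : ∃ w, f w = 1 := by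
  obtain ⟨x, hx⟩ := DFunLike.ne_iff.1 hf
  exact ⟨(f x)⁻¹ • x, by simpa using inv_mul_cancel₀ hx⟩

lemma convex_setOf_pos_inv_le : Convex ℝ {p : ℝ × ℝ | 0 < p.1 ∧ p.1⁻¹ ≤ p.2} := by
  simpa using (convexOn_zpow (𝕜 := ℝ) (-1)).convex_epigraph

lemma isClosed_setOf_pos_inv_le : IsClosed {p : ℝ × ℝ | 0 < p.1 ∧ p.1⁻¹ ≤ p.2} := by
  have : {p : ℝ × ℝ | 0 < p.1 ∧ p.1⁻¹ ≤ p.2} = {p | 0 ≤ p.1 ∧ 1 ≤ p.1 * p.2} := by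
    ext ⟨a, b⟩
    simp only [mem_ofPred_eq]
    constructor
    · rintro ⟨ha, hab⟩
      exact ⟨ha.le, (inv_le_iff_one_le_mul₀' ha).1 hab⟩
    · rintro ⟨ha, hab⟩
      have ha' : 0 < a := ha.lt_of_ne <| by rintro rfl; norm_num at hab
      exact ⟨ha', (inv_le_iff_one_le_mul₀' ha').2 hab⟩
  rw [this]
  exact (isClosed_le continuous_const continuous_fst).inter
    (isClosed_le continuous_const (continuous_fst.mul continuous_snd))

lemma not_strongSepProperty_of_forall_not_isMaxOn {C : Set X} (hne : C.Nonempty)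
    {f : X →L[ℝ] ℝ} (hf : f ∈ barrierCone C) (hf0 : f ≠ 0) (hmax : ∀ c ∈ C, ¬ IsMaxOn f C c) :
    ¬ StrongSepProperty C := by
  intro hssp
  obtain ⟨w, hw⟩ := f.exists_apply_eq_one hf0
  have hbdd : BddAbove (f '' C) := by
    obtain ⟨b, hb⟩ := hf
    exact ⟨b, by rintro _ ⟨c, hc, rfl⟩; exact hb c hc⟩
  set s := sSup (f '' C)
  have hlt : ∀ c ∈ C, f c < s := fun c hc =>
    (le_csSup hbdd ⟨c, hc, rfl⟩).lt_of_ne fun h =>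
      hmax c hc fun x hx => h ▸ le_csSup hbdd ⟨x, hx, rfl⟩
  obtain ⟨u, -, hu, huC⟩ := exists_seq_tendsto_sSup (hne.image f) hbdd
  choose c hc hcu using huC
  have hD : Convex ℝ {x | f x = s} := convex_hyperplane f.toLinearMap.isLinear s
  refine (hssp {x | f x = s} ⟨s • w, by simp [hw]⟩ (isClosed_eq f.continuous continuous_const) hD
    (disjoint_left.2 fun x hx hxs => (hlt x hx).ne hxs)).zero_notMem_closure_sub ?_
  refine mem_closure_of_tendsto (f := fun n => c n - (c n + (s - u n) • w)) (b := atTop) ?_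
    (.of_forall fun n => sub_mem_sub (hc n) ?_)
  · have h := ((tendsto_const_nhds (x := s)).sub hu).smul_const w |>.neg
    rw [sub_self, zero_smul, neg_zero] at h
    exact h.congr fun n => by abel
  · simp [hw, hcu]

lemma not_strongSepProperty_of_isMaxOn_of_mem_asymptoticCone {C : Set X} (hcl : IsClosed C)
    (hconv : Convex ℝ C) {f : X →L[ℝ] ℝ} (hf0 : f ≠ 0) {c₀ : X} (hc₀ : c₀ ∈ C)
    (hmax : IsMaxOn f C c₀) {v : X} (hv : v ∈ asymptoticCone ℝ C) (hv0 : v ≠ 0)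
    (hfv : f v = 0) : ¬ StrongSepProperty C := by
  intro hssp
  obtain ⟨w, hw⟩ := f.exists_apply_eq_one hf0
  obtain ⟨h, hh⟩ := SeparatingDual.exists_eq_one (R := ℝ) hv0
  set g := h - h w • f
  have hgv : g v = 1 := by simp [g, hh, hfv]
  have hgw : g w = 0 := by simp [g, hw]
  -- In the coordinates `(g, f)` centred at `c₀`, `D` is a branch of a hyperbola asymptotic to the
  -- ray `c₀ + t • v`, which lies in `C`.
  set D := (fun x => (g (x - c₀), f (x - c₀))) ⁻¹' {p : ℝ × ℝ | 0 < p.1 ∧ p.1⁻¹ ≤ p.2}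
  have hray : ∀ n : ℕ, ((n : ℝ) + 1) • v + c₀ ∈ C := fun n =>
    hconv.smul_vadd_mem_of_isClosed_of_mem_asymptoticCone hcl (by positivity) hv hc₀
  have hyD : ∀ n : ℕ, ((n : ℝ) + 1) • v + c₀ + (1 / ((n : ℝ) + 1)) • w ∈ D := fun n => by
    simp [D, hgv, hgw, hfv, hw, n.cast_add_one_pos]
  have hDcl : IsClosed D := isClosed_setOf_pos_inv_le.preimage (by fun_prop)
  have hDconv : Convex ℝ D := by
    convert (convex_setOf_pos_inv_le.linear_preimage
      (g.prod f).toLinearMap).translate_preimage_right (-c₀) using 1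
    ext x
    simp [D, sub_eq_neg_add]
  have hCD : Disjoint C D := disjoint_left.2 fun x hxC ⟨hpos, hle⟩ => by
    have : f (x - c₀) ≤ 0 := by simpa using hmax hxC
    linarith [inv_pos.2 hpos]
  refine (hssp D ⟨_, hyD 0⟩ hDcl hDconv hCD).zero_notMem_closure_sub ?_
  refine mem_closure_of_tendsto (b := atTop) ?_ (.of_forall fun n => sub_mem_sub (hray n) (hyD n))
  have h := (tendsto_one_div_add_atTop_nhds_zero_nat (𝕜 := ℝ)).smul_const w |>.neg
  rw [zero_smul, neg_zero] at h
  exact h.congr fun n => by abel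

end NormedSpace

section ProperSpace

variable {X : Type*} [NormedAddCommGroup X] [ProperSpace X]

lemma tendsto_norm_atTop_of_tendsto_sub {C D : Set X} (hC : IsClosed C) (hD : IsClosed D)
    (hCD : Disjoint C D) {c d : ℕ → X} (hc : ∀ n, c n ∈ C) (hd : ∀ n, d n ∈ D)
    (hcd : Tendsto (fun n => c n - d n) atTop (𝓝 0)) :
    Tendsto (fun n => ‖c n‖) atTop atTop := by
  refine tendsto_atTop.2 fun R => ?_
  by_contra hR
  have hball : ∃ᶠ n in atTop, c n ∈ Metric.closedBall (0 : X) R :=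
    (not_eventually.1 hR).mono fun n hn => by simpa using (not_le.1 hn).le
  obtain ⟨x, -, φ, hφ, hcx⟩ := (isCompact_closedBall (0 : X) R).tendsto_subseq' hball
  have hdx : Tendsto (fun n => d (φ n)) atTop (𝓝 x) := by
    simpa using hcx.sub (hcd.comp hφ.tendsto_atTop)
  exact hCD.ne_of_mem (hC.mem_of_tendsto hcx (.of_forall fun n => hc _))
    (hD.mem_of_tendsto hdx (.of_forall fun n => hd _)) rfl

variable [NormedSpace ℝ X]

lemma exists_subseq_tendsto_inv_norm_smul {y : ℕ → X}
    (hy : Tendsto (fun n => ‖y n‖) atTop atTop) :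
    ∃ v : X, ‖v‖ = 1 ∧ ∃ φ : ℕ → ℕ, StrictMono φ ∧
      Tendsto (fun n => ‖y (φ n)‖⁻¹ • y (φ n)) atTop (𝓝 v) := by
  have hsphere : ∀ᶠ n in atTop, ‖y n‖⁻¹ • y n ∈ Metric.sphere (0 : X) 1 := by
    filter_upwards [hy.eventually_gt_atTop 0] with n hn
    rw [mem_sphere_zero_iff_norm]
    exact norm_smul_inv_norm (norm_pos_iff.1 hn)
  obtain ⟨v, hv, φ, hφ, hlim⟩ := (isCompact_sphere (0 : X) 1).tendsto_subseq' hsphere.frequently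
  exact ⟨v, mem_sphere_zero_iff_norm.1 hv, φ, hφ, hlim⟩

lemma exists_ne_zero_mem_asymptoticCone_of_zero_mem_closure_sub {C D : Set X} (hC : IsClosed C)
    (hD : IsClosed D) (hCD : Disjoint C D) (h0 : (0 : X) ∈ closure (C - D)) :
    ∃ v ≠ 0, v ∈ asymptoticCone ℝ C ∧ v ∈ asymptoticCone ℝ D := by
  obtain ⟨x, hx, hx0⟩ := mem_closure_iff_seq_limit.1 h0
  choose c hc d hd hcd using hx
  replace hx0 : Tendsto (fun n => c n - d n) atTop (𝓝 0) := by simpa only [hcd] using hx0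
  have hcn := tendsto_norm_atTop_of_tendsto_sub hC hD hCD hc hd hx0
  obtain ⟨v, hv, φ, hφ, hcv⟩ := exists_subseq_tendsto_inv_norm_smul hcn
  have hr := hcn.comp hφ.tendsto_atTop
  have hdv : Tendsto (fun n => ‖c (φ n)‖⁻¹ • d (φ n)) atTop (𝓝 v) := by
    have hsmall := (hr.inv_tendsto_atTop.smul (hx0.comp hφ.tendsto_atTop))
    rw [zero_smul] at hsmall
    simpa [smul_sub] using hcv.sub hsmall
  exact ⟨v, ne_zero_of_norm_ne_zero (hv.symm ▸ one_ne_zero),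
    mem_asymptoticCone_of_tendsto hr hcv (.of_forall fun n => hc _),
    mem_asymptoticCone_of_tendsto hr hdv (.of_forall fun n => hd _)⟩

lemma exists_ne_zero_mem_asymptoticCone_apply_eq_zero {C : Set X} {f : X →L[ℝ] ℝ}
    (hf : f ∈ barrierCone C) (hfi : f ∉ interior (barrierCone C)) :
    ∃ v ≠ 0, v ∈ asymptoticCone ℝ C ∧ f v = 0 := by
  choose c hc hcn hfc using fun n : ℕ =>
    exists_mem_le_norm_of_notMem_interior_barrierCone hf hfi (Nat.inv_pos_of_nat (n := n)) (n + 1)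
  have hnorm : Tendsto (fun n => ‖c n‖) atTop atTop :=
    tendsto_atTop_mono (fun n => (le_add_of_nonneg_right zero_le_one).trans (hcn n))
      tendsto_natCast_atTop_atTop
  obtain ⟨v, hv, φ, hφ, hlim⟩ := exists_subseq_tendsto_inv_norm_smul hnorm
  have hvC := mem_asymptoticCone_of_tendsto (hnorm.comp hφ.tendsto_atTop) hlim
    (.of_forall fun n => hc _)
  have hfv : 0 ≤ f v := by
    have hlow : Tendsto (fun n => -((φ n : ℝ) + 1)⁻¹) atTop (𝓝 0) := by
      simpa [Function.comp_def] using
        (tendsto_one_div_add_atTop_nhds_zero_nat (𝕜 := ℝ) |>.comp hφ.tendsto_atTop).neg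
    refine le_of_tendsto_of_tendsto hlow ((f.continuous.tendsto v).comp hlim)
      (.of_forall fun n => ?_)
    have hpos : 0 < ‖c (φ n)‖ := (Nat.cast_add_one_pos _).trans_le (hcn _)
    rw [Function.comp_apply, map_smul, smul_eq_mul, le_inv_mul_iff₀ hpos]
    linarith [hfc (φ n)]
  exact ⟨v, ne_zero_of_norm_ne_zero (hv.symm ▸ one_ne_zero), hvC,
    le_antisymm (apply_nonpos_of_mem_asymptoticCone hf hvC) hfv⟩

lemma barrierCone_subset_of_strongSepProperty {C : Set X} (hne : C.Nonempty) (hcl : IsClosed C)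
    (hconv : Convex ℝ C) (hssp : StrongSepProperty C) :
    barrierCone C ⊆ interior (barrierCone C) ∪ {0} := by
  intro f hf
  rw [mem_union, mem_singleton_iff, or_iff_not_imp_right]
  intro hf0
  by_contra hfi
  obtain ⟨v, hv0, hv, hfv⟩ := exists_ne_zero_mem_asymptoticCone_apply_eq_zero hf hfi
  by_cases hatt : ∃ c₀ ∈ C, IsMaxOn f C c₀
  · obtain ⟨c₀, hc₀, hmax⟩ := hatt
    exact not_strongSepProperty_of_isMaxOn_of_mem_asymptoticCone hcl hconv hf0 hc₀ hmax hv hv0 hfv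
      hssp
  · push Not at hatt
    exact not_strongSepProperty_of_forall_not_isMaxOn hne hf hf0 hatt hssp

end ProperSpace

section FiniteDimensional

variable {X : Type*} [NormedAddCommGroup X] [NormedSpace ℝ X] [FiniteDimensional ℝ X]

lemma Convex.exists_ne_zero_forall_eq_of_interior_eq_empty {K : Set X} (hK : Convex ℝ K)
    (hne : K.Nonempty) (hint : interior K = ∅) :
    ∃ f : X →L[ℝ] ℝ, f ≠ 0 ∧ ∃ a : ℝ, ∀ k ∈ K, f k = a := by
  obtain ⟨k₀, hk₀⟩ := hne
  have hspan : affineSpan ℝ K ≠ ⊤ := fun h => by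
    simpa [hint] using hK.interior_nonempty_iff_affineSpan_eq_top.2 h
  have hdir : (affineSpan ℝ K).direction < ⊤ := lt_top_iff_ne_top.2 fun h =>
    hspan ((AffineSubspace.direction_eq_top_iff_of_nonempty ⟨k₀, subset_affineSpan ℝ K hk₀⟩).1 h)
  obtain ⟨φ, hφ0, hker⟩ := Submodule.exists_le_ker_of_lt_top _ hdir
  refine ⟨LinearMap.toContinuousLinearMap φ, by simpa using hφ0, φ k₀, fun k hk => ?_⟩
  have : φ (k - k₀) = 0 :=
    hker (AffineSubspace.vsub_mem_direction (subset_affineSpan ℝ K hk) (subset_affineSpan ℝ K hk₀))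
  simpa [sub_eq_zero] using this

lemma Convex.exists_ne_zero_forall_le_of_notMem_interior {K : Set X} (hK : Convex ℝ K)
    (hne : K.Nonempty) {x : X} (hx : x ∉ interior K) :
    ∃ f : X →L[ℝ] ℝ, f ≠ 0 ∧ ∀ k ∈ K, f k ≤ f x := by
  rcases (interior K).eq_empty_or_nonempty with hint | hint
  · obtain ⟨f, hf0, a, hfa⟩ := hK.exists_ne_zero_forall_eq_of_interior_eq_empty hne hint
    rcases le_total a (f x) with hax | hxa
    · exact ⟨f, hf0, fun k hk => (hfa k hk).trans_le hax⟩
    · refine ⟨-f, neg_ne_zero.2 hf0, fun k hk => ?_⟩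
      simpa [hfa k hk] using hxa
  · exact geometric_hahn_banach_of_nonempty_interior_point hK hx hint

lemma strongSepProperty_of_barrierCone_subset {C : Set X} (hne : C.Nonempty) (hcl : IsClosed C)
    (hconv : Convex ℝ C) (h : barrierCone C ⊆ interior (barrierCone C) ∪ {0}) :
    StrongSepProperty C := by
  intro D hDne hDcl hDconv hCD
  refine stronglySeparated_of_zero_notMem_closure_sub hconv hDconv hne hDne fun h0 => ?_
  obtain ⟨v, hv0, hvC, hvD⟩ :=
    exists_ne_zero_mem_asymptoticCone_of_zero_mem_closure_sub hcl hDcl hCD h0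
  obtain ⟨f, hf0, hf⟩ := (hconv.sub hDconv).exists_ne_zero_forall_le_of_notMem_interior
    (hne.sub hDne) fun h0' => hCD.zero_notMem_sub_set (interior_subset h0')
  have hfCD : ∀ c ∈ C, ∀ d ∈ D, f c ≤ f d := fun c hc d hd => by
    simpa using hf _ (sub_mem_sub hc hd)
  obtain ⟨c₀, hc₀⟩ := hne
  obtain ⟨d₀, hd₀⟩ := hDne
  have hfint : f ∈ interior (barrierCone C) :=
    (h ⟨f d₀, fun c hc => hfCD c hc d₀ hd₀⟩).resolve_right hf0
  have hnegD : -f ∈ barrierCone D := ⟨-f c₀, fun d hd => by simpa using hfCD c₀ hc₀ d hd⟩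
  have := apply_nonpos_of_mem_asymptoticCone hnegD hvD
  rw [neg_apply] at this
  linarith [apply_neg_of_mem_interior_barrierCone hfint hvC hv0]

lemma interior_nonempty_of_not_isBounded {C : Set X} (hne : C.Nonempty) (hconv : Convex ℝ C)
    (hub : ¬ IsBounded C) (h : barrierCone C ⊆ interior (barrierCone C) ∪ {0}) :
    (interior C).Nonempty := by
  by_contra hint
  obtain ⟨f, hf0, a, hfa⟩ :=
    hconv.exists_ne_zero_forall_eq_of_interior_eq_empty hne (not_nonempty_iff_eq_empty.1 hint)
  obtain ⟨v, hv0, hv⟩ := not_bounded_iff_exists_ne_zero_mem_asymptoticCone.1 hub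
  have hfint : f ∈ interior (barrierCone C) :=
    (h ⟨a, fun c hc => (hfa c hc).le⟩).resolve_right hf0
  have hnegC : -f ∈ barrierCone C := ⟨-a, fun c hc => by simp [hfa c hc]⟩
  have := apply_nonpos_of_mem_asymptoticCone hnegC hv
  rw [neg_apply] at this
  linarith [apply_neg_of_mem_interior_barrierCone hfint hv hv0]

end FiniteDimensional

/-- In a finite-dimensional real normed space, a nonempty closed convex set `C`
has the strong separation property iff `barc(C) = Int barc(C) ∪ {0}`; moreover, if `C` is
unbounded and has the strong separation property then `Int C ≠ ∅`. -/
theorem statement13 {X : Type*} [NormedAddCommGroup X] [NormedSpace ℝ X]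
    [FiniteDimensional ℝ X]
    (C : Set X) (hne : C.Nonempty) (hcl : IsClosed C) (hconv : Convex ℝ C) :
    (StrongSepProperty C ↔ barrierCone C = interior (barrierCone C) ∪ {0}) ∧
      (¬ Bornology.IsBounded C → StrongSepProperty C → (interior C).Nonempty) := by
  have hsep : StrongSepProperty C ↔ barrierCone C ⊆ interior (barrierCone C) ∪ {0} :=
    ⟨barrierCone_subset_of_strongSepProperty hne hcl hconv,
      strongSepProperty_of_barrierCone_subset hne hcl hconv⟩
  have hsub : barrierCone C ⊆ interior (barrierCone C) ∪ {0} ↔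
      barrierCone C = interior (barrierCone C) ∪ {0} :=
    ⟨fun h => h.antisymm (union_subset interior_subset
      (singleton_subset_iff.2 (zero_mem_barrierCone C))), Eq.subset⟩
  exact ⟨hsep.trans hsub, fun hub h => interior_nonempty_of_not_isBounded hne hconv hub (hsep.1 h)⟩
end

section
/- Let X be a real Hilbert space and let M and N be closed linear subspaces of X with M ∩ N = {0} such that M + N is dense in X but M + N ≠ X. Let x₀ ∈ X \ (M + N), and set C = x₀ − M = {x₀ − m : m ∈ M} and D = N. Then C and D are disjoint nonempty closed convex sets with rec(C) ∩ rec(D) = {0} (indeed rec(C) = M and rec(D) = N), and C and D are not separated: there is no nonzero x* ∈ X* with sup{⟨x*, c⟩ : c ∈ C} ≤ inf{⟨x*, d⟩ : d ∈ D}. -/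
open Pointwise

/-- `C` and `D` are separated: there is a nonzero continuous linear functional whose supremum
over `C` is at most its infimum over `D`. -/
def Separated {X : Type*} [NormedAddCommGroup X] [NormedSpace ℝ X] (C D : Set X) : Prop :=
  ∃ f : X →L[ℝ] ℝ, f ≠ 0 ∧ ∃ a : ℝ, (∀ c ∈ C, f c ≤ a) ∧ ∀ d ∈ D, a ≤ f d

lemma aux_slope_zero (b c : ℝ) (h : ∀ t : ℝ, b ≤ t * c) : c = 0 := by
  by_contra hc
  have := h ((b - 1) / c)
  rw [div_mul_cancel₀ _ hc] at this
  linarith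

/-- Let `X` be a real Hilbert space, `M`, `N` closed linear subspaces with
`M ∩ N = {0}`, `M + N` dense in `X` but `M + N ≠ X`, and `x₀ ∉ M + N`. With `C = x₀ - M`
and `D = N`: `C`, `D` are disjoint nonempty closed convex sets, `rec(C) = M`, `rec(D) = N`
(so `rec(C) ∩ rec(D) = {0}`), and `C`, `D` are not separated. -/
theorem statement17 {X : Type*} [NormedAddCommGroup X] [InnerProductSpace ℝ X]
    [CompleteSpace X]
    (M N : Submodule ℝ X) (hMcl : IsClosed (M : Set X)) (hNcl : IsClosed (N : Set X))
    (hMN : (M : Set X) ∩ (N : Set X) = {0})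
    (hdense : Dense ((M : Set X) + (N : Set X)))
    (hproper : (M : Set X) + (N : Set X) ≠ Set.univ)
    (x₀ : X) (hx₀ : x₀ ∉ (M : Set X) + (N : Set X))
    (C D : Set X)
    (hC : C = (fun me => x₀ - me) '' (M : Set X)) (hD : D = (N : Set X)) :
    Disjoint C D ∧ C.Nonempty ∧ IsClosed C ∧ Convex ℝ C ∧
      D.Nonempty ∧ IsClosed D ∧ Convex ℝ D ∧
      recessionCone C = (M : Set X) ∧ recessionCone D = (N : Set X) ∧
      recessionCone C ∩ recessionCone D = {0} ∧
      ¬ Separated C D := by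
  have hCset : C = (fun x => x₀ - x) ⁻¹' (M : Set X) := by
    rw [hC]; ext x
    constructor
    · rintro ⟨m, hm, rfl⟩
      simpa using hm
    · intro hx
      exact ⟨x₀ - x, hx, by module⟩
  have hdisj : Disjoint C D := by
    rw [Set.disjoint_left]
    rintro x hxC hxD
    rw [hC] at hxC
    obtain ⟨m, hm, rfl⟩ := hxC
    rw [hD] at hxD
    exact hx₀ ⟨m, hm, x₀ - m, hxD, by module⟩
  have hx0M : (0 : X) ∈ (M : Set X) := M.zero_mem
  have hx₀C : x₀ ∈ C := by rw [hC]; exact ⟨0, hx0M, by simp⟩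
  have hCne : C.Nonempty := ⟨x₀, hx₀C⟩
  have hCcl : IsClosed C := by
    rw [hCset]
    exact hMcl.preimage (by continuity)
  have hCconv : Convex ℝ C := by
    rw [hC]
    rintro x ⟨m1, hm1, rfl⟩ y ⟨m2, hm2, rfl⟩ a b ha hb hab
    refine ⟨a • m1 + b • m2, M.add_mem (M.smul_mem _ hm1) (M.smul_mem _ hm2), ?_⟩
    rw [show a • (x₀ - m1) + b • (x₀ - m2) = (a + b) • x₀ - (a • m1 + b • m2) by module, hab,
      one_smul]
  have hDne : D.Nonempty := ⟨0, by rw [hD]; exact N.zero_mem⟩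
  have hDcl : IsClosed D := hD ▸ hNcl
  have hDconv : Convex ℝ D := hD ▸ N.convex
  have hrecC : recessionCone C = (M : Set X) := by
    ext v
    constructor
    · intro hv
      have h2 := hv x₀ hx₀C
      rw [hCset, Set.mem_preimage] at h2
      have : x₀ - (x₀ + v) = -v := by abel
      rw [this] at h2
      simpa using M.neg_mem h2
    · intro hv c hc
      rw [hCset] at hc ⊢
      have : x₀ - (c + v) = (x₀ - c) - v := by abel
      rw [Set.mem_preimage, this]
      exact M.sub_mem hc hv
  have hrecD : recessionCone D = (N : Set X) := by
    ext v
    constructor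
    · intro hv
      have h2 := hv 0 (by rw [hD]; exact N.zero_mem)
      rw [hD] at h2
      simpa using h2
    · intro hv d hd
      rw [hD] at hd ⊢
      exact N.add_mem hd hv
  refine ⟨hdisj, hCne, hCcl, hCconv, hDne, hDcl, hDconv, hrecC, hrecD, ?_, ?_⟩
  · rw [hrecC, hrecD, hMN]
  · rintro ⟨f, hf, a, hfC, hfD⟩
    -- f vanishes on N
    have hN0 : ∀ n ∈ N, f n = 0 := by
      intro n hn
      exact aux_slope_zero a (f n) fun t => by
        have := hfD (t • n) (by rw [hD]; exact N.smul_mem t hn)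
        simpa using this
    have hM0 : ∀ m ∈ M, f m = 0 := by
      intro m hm
      have h1 : ∀ t : ℝ, f x₀ - a ≤ t * f m := by
        intro t
        have := hfC (x₀ - t • m) (by rw [hC]; exact ⟨t • m, M.smul_mem t hm, rfl⟩)
        simp only [map_sub, map_smul, smul_eq_mul] at this
        linarith
      exact aux_slope_zero _ _ h1
    have hzero : ∀ x ∈ (M : Set X) + (N : Set X), f x = 0 := by
      rintro x ⟨m, hm, n, hn, rfl⟩
      rw [map_add, hM0 m hm, hN0 n hn, add_zero]
    have : f = 0 := by
      ext x
      have heq : Set.EqOn (⇑f) (fun _ => (0:ℝ)) ((M : Set X) + (N : Set X)) := hzero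
      have := Continuous.ext_on hdense f.continuous continuous_const heq
      exact congrFun this x
    exact hf this
end

section
/- In the real Hilbert space ℓ², let C = {(x_n) ∈ ℓ² : Σ_{n=1}^∞ x_n/n = 1 and x_n ≥ 0 for all n} and D = {(y_n) ∈ ℓ² : Σ_{n=1}^∞ y_n/(n+1) = 1 and y_n ≥ 0 for all n}. Then C and D are disjoint nonempty unbounded closed convex subsets of ℓ², rec(C) = rec(D) = {0}, and inf{‖ξ − ζ‖₂ : ξ ∈ C, ζ ∈ D} = 0; in particular, C and D are not strongly separated. -/
/-!
Both sets are slices `{ξ ≥ 0 : ⟪w, ξ⟫ = 1}` of the nonnegative cone of `ℓ²` by a hyperplane whose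
normal `w` has positive coordinates (`w k = 1/(k+1)` for `C`, `w k = 1/(k+2)` for `D`). Positivity
of `w` forces every nonnegative `ξ` with `⟪w, ξ⟫ = 0` to vanish. A recession direction `v` of a
slice is such a vector (`ξ + n • v` stays in the slice for all `n`), so it is `0`; applied to the
difference of the two normals, the same fact gives disjointness. Since `w k → 0`, the points
`(w k)⁻¹ eₖ` of a slice are unbounded. Finally `(k+1) eₖ ∈ C` lies at distance `2/(k+2)` from
`(k+1) eₖ + (2/(k+2)) e₀ ∈ D`, so the sets are at distance `0` and cannot be strongly separated.
-/

open Filter Topology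

open scoped InnerProductSpace

local notation "ℓ²(" ι ")" => lp (fun _ : ι => ℝ) 2

section Normed

variable {X : Type*} [NormedAddCommGroup X] [NormedSpace ℝ X]

lemma add_nsmul_mem_of_mem_recessionCone {S : Set X} {v c : X} (hv : v ∈ recessionCone S)
    (hc : c ∈ S) (n : ℕ) : c + n • v ∈ S := by
  induction n with
  | zero => simpa using hc
  | succ n ih => simpa [succ_nsmul, add_assoc] using hv _ ih

lemma not_stronglySeparated_of_forall_exists_norm_sub_lt {C D : Set X}
    (h : ∀ ε > (0 : ℝ), ∃ c ∈ C, ∃ d ∈ D, ‖c - d‖ < ε) : ¬ StronglySeparated C D := by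
  rintro ⟨f, -, a, b, hab, hC, hD⟩
  obtain ⟨c, hc, d, hd, hcd⟩ := h ((b - a) / (‖f‖ + 1)) (div_pos (sub_pos.mpr hab) (by positivity))
  refine lt_irrefl (b - a) ?_
  calc b - a ≤ f d - f c := by linarith [hC c hc, hD d hd]
    _ ≤ ‖f‖ * ‖c - d‖ := by
      rw [← map_sub, norm_sub_rev]
      exact (le_abs_self _).trans (f.le_opNorm _)
    _ ≤ ‖c - d‖ * (‖f‖ + 1) := by nlinarith [norm_nonneg (c - d)]
    _ < b - a := (lt_div_iff₀ (by positivity)).mp hcd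

end Normed

lemma nonneg_of_forall_nat_add_mul_nonneg {a b : ℝ} (h : ∀ n : ℕ, 0 ≤ a + n * b) : 0 ≤ b := by
  by_contra! hb
  obtain ⟨n, hn⟩ := exists_nat_gt (a / -b)
  have := (div_lt_iff₀ (neg_pos.mpr hb)).mp hn
  linarith [h n]

section Slice

variable {ι : Type*}

def nonnegSlice (w : ℓ²(ι)) : Set ℓ²(ι) :=
  {ξ | ⟪w, ξ⟫_ℝ = 1 ∧ ∀ i, 0 ≤ ξ i}

lemma eq_zero_of_inner_eq_zero_of_nonneg {w ξ : ℓ²(ι)} (hw : ∀ i, 0 < w i)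
    (hξ : ∀ i, 0 ≤ ξ i) (h : ⟪w, ξ⟫_ℝ = 0) : ξ = 0 := by
  have hsum : HasSum (fun i => w i * ξ i) 0 := by
    simpa [mul_comm, h] using lp.hasSum_inner (𝕜 := ℝ) w ξ
  rw [hasSum_zero_iff_of_nonneg fun i => mul_nonneg (hw i).le (hξ i)] at hsum
  ext i
  simpa [(hw i).ne'] using congr_fun hsum i

lemma isClosed_nonnegSlice (w : ℓ²(ι)) : IsClosed (nonnegSlice w) := by
  rw [nonnegSlice, Set.ofPred_and, Set.ofPred_forall]
  exact (isClosed_eq (by fun_prop) continuous_const).inter <| isClosed_iInter fun i =>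
    isClosed_le continuous_const (lp.lipschitzWith_one_eval 2 i).continuous

lemma convex_nonnegSlice (w : ℓ²(ι)) : Convex ℝ (nonnegSlice w) := by
  rintro ξ ⟨hξw, hξ⟩ η ⟨hηw, hη⟩ a b ha hb hab
  refine ⟨by simp [inner_add_right, real_inner_smul_right, hξw, hηw, hab], fun i => ?_⟩
  have := hξ i
  have := hη i
  simp only [lp.coeFn_add, lp.coeFn_smul, Pi.add_apply, Pi.smul_apply, smul_eq_mul]
  positivity

lemma recessionCone_nonnegSlice {w : ℓ²(ι)} (hw : ∀ i, 0 < w i)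
    (hne : (nonnegSlice w).Nonempty) : recessionCone (nonnegSlice w) = {0} := by
  obtain ⟨ξ, hξ⟩ := hne
  ext v
  refine ⟨fun hv => ?_, by rintro rfl; simp [recessionCone]⟩
  have hmem := add_nsmul_mem_of_mem_recessionCone hv hξ
  have hv_nonneg (i : ι) : 0 ≤ v i :=
    nonneg_of_forall_nat_add_mul_nonneg fun n => by
      simpa [← nsmul_eq_mul] using (hmem n).2 i
  have hv_inner : ⟪w, v⟫_ℝ = 0 := by
    simpa [inner_add_right, hξ.1] using (hmem 1).1
  exact eq_zero_of_inner_eq_zero_of_nonneg hw hv_nonneg hv_inner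

lemma disjoint_nonnegSlice {v w : ℓ²(ι)} (hwv : ∀ i, w i < v i) :
    Disjoint (nonnegSlice v) (nonnegSlice w) := by
  refine Set.disjoint_left.mpr fun ξ hv hw => ?_
  have hξ : ξ = 0 := eq_zero_of_inner_eq_zero_of_nonneg (w := v - w)
    (fun i => sub_pos.mpr (hwv i)) hv.2 (by rw [inner_sub_left, hv.1, hw.1, sub_self])
  simpa [hξ] using hv.1

lemma exists_abs_apply_lt_of_infinite [Infinite ι] (w : ℓ²(ι)) {ε : ℝ} (hε : 0 < ε) :
    ∃ i, |w i| < ε := by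
  have hsum : Summable fun i => ‖w i‖ ^ (2 : ℝ) := by
    simpa using (lp.memℓp w).summable (by norm_num)
  obtain ⟨i, hi⟩ :=
    (hsum.tendsto_cofinite_zero.eventually_lt_const (by positivity : 0 < ε ^ (2 : ℝ))).exists
  exact ⟨i, by simpa [Real.rpow_two, sq_lt_sq, abs_of_pos hε] using hi⟩

variable [DecidableEq ι]

lemma single_apply_nonneg {i : ι} {x : ℝ} (hx : 0 ≤ x) (j : ι) :
    0 ≤ (lp.single 2 i x : ℓ²(ι)) j := by
  rw [lp.single_apply, Pi.single_apply]
  split_ifs <;> simp [hx]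

lemma single_inv_mem_nonnegSlice {w : ℓ²(ι)} {i : ι} (hw : 0 < w i) :
    lp.single 2 i (w i)⁻¹ ∈ nonnegSlice w :=
  ⟨by simp [lp.inner_single_right, hw.ne'], single_apply_nonneg (inv_nonneg.mpr hw.le)⟩

lemma not_isBounded_nonnegSlice [Infinite ι] {w : ℓ²(ι)} (hw : ∀ i, 0 < w i) :
    ¬ Bornology.IsBounded (nonnegSlice w) := by
  rw [isBounded_iff_forall_norm_le]
  rintro ⟨M, hM⟩
  obtain ⟨i, hi⟩ := exists_abs_apply_lt_of_infinite w (inv_pos.mpr (by positivity : 0 < |M| + 1))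
  have hnorm := hM _ (single_inv_mem_nonnegSlice (hw i))
  rw [lp.norm_single (by norm_num), norm_inv, Real.norm_eq_abs] at hnorm
  have := lt_inv_of_lt_inv₀ (abs_pos.mpr (hw i).ne') hi
  linarith [le_abs_self M]

end Slice

noncomputable def harmonicWeight (c : ℝ) : ℓ²(ℕ) :=
  ⟨fun k => 1 / ((k : ℝ) + c), memℓp_gen <| by
    simpa [Real.norm_eq_abs] using (Real.summable_one_div_nat_add_rpow c 2).2 one_lt_two⟩

@[simp]
lemma harmonicWeight_apply (c : ℝ) (k : ℕ) : harmonicWeight c k = 1 / ((k : ℝ) + c) := rfl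

lemma harmonicWeight_pos {c : ℝ} (hc : 0 < c) (k : ℕ) : 0 < harmonicWeight c k := by
  rw [harmonicWeight_apply]; positivity

lemma inner_harmonicWeight (c : ℝ) (ξ : ℓ²(ℕ)) :
    ⟪harmonicWeight c, ξ⟫_ℝ = ∑' k : ℕ, ξ k / ((k : ℝ) + c) := by
  rw [lp.inner_eq_tsum]
  exact tsum_congr fun k => by simp [div_eq_mul_inv]

lemma exists_norm_sub_lt_harmonic {ε : ℝ} (hε : 0 < ε) :
    ∃ ξ ∈ nonnegSlice (harmonicWeight 1), ∃ ζ ∈ nonnegSlice (harmonicWeight 2), ‖ξ - ζ‖ < ε := by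
  obtain ⟨n, hn⟩ := exists_nat_gt (2 / ε)
  set t : ℝ := 2 / ((n : ℝ) + 2)
  have ht : 0 < t := by positivity
  have hξ : lp.single 2 n ((n : ℝ) + 1) ∈ nonnegSlice (harmonicWeight 1) := by
    simpa using single_inv_mem_nonnegSlice (harmonicWeight_pos one_pos n)
  refine ⟨_, hξ, lp.single 2 n ((n : ℝ) + 1) + lp.single 2 0 t, ⟨?_, fun k => ?_⟩, ?_⟩
  · simp only [inner_add_right, lp.inner_single_right, harmonicWeight_apply, Real.inner_apply, t]
    field_simp
    push_cast
    ring
  · rw [lp.coeFn_add, Pi.add_apply]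
    exact add_nonneg (single_apply_nonneg (by positivity) k) (single_apply_nonneg ht.le k)
  · rw [sub_add_cancel_left, norm_neg, lp.norm_single (by norm_num), Real.norm_eq_abs,
      abs_of_pos ht, div_lt_iff₀ (by positivity)]
    have := (div_lt_iff₀ hε).mp hn
    linarith

/-- In `ℓ²`, the sets
`C = {(x_n) : Σ x_n/n = 1, x_n ≥ 0}` and `D = {(y_n) : Σ y_n/(n+1) = 1, y_n ≥ 0}`
(indices starting at `1` in the paper; here sequences are indexed by `ℕ` starting at `0`, so
the weights are `1/(k+1)` and `1/(k+2)` respectively) are disjoint nonempty unbounded closed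
convex sets with `rec(C) = rec(D) = {0}` and `inf{‖ξ - ζ‖ : ξ ∈ C, ζ ∈ D} = 0`; in
particular they are not strongly separated. -/
theorem statement18
    (C D : Set (lp (fun _ : ℕ => ℝ) 2))
    (hC : C = {ξ : lp (fun _ : ℕ => ℝ) 2 |
      (∑' k : ℕ, ξ k / ((k : ℝ) + 1)) = 1 ∧ ∀ k, 0 ≤ ξ k})
    (hD : D = {ζ : lp (fun _ : ℕ => ℝ) 2 |
      (∑' k : ℕ, ζ k / ((k : ℝ) + 2)) = 1 ∧ ∀ k, 0 ≤ ζ k}) :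
    Disjoint C D ∧ C.Nonempty ∧ D.Nonempty ∧
      ¬ Bornology.IsBounded C ∧ ¬ Bornology.IsBounded D ∧
      IsClosed C ∧ IsClosed D ∧ Convex ℝ C ∧ Convex ℝ D ∧
      recessionCone C = {0} ∧ recessionCone D = {0} ∧
      (∀ ε > (0 : ℝ), ∃ ξ ∈ C, ∃ ζ ∈ D, ‖ξ - ζ‖ < ε) ∧
      ¬ StronglySeparated C D := by
  have hC' : C = nonnegSlice (harmonicWeight 1) := by
    simp only [hC, nonnegSlice, inner_harmonicWeight]
  have hD' : D = nonnegSlice (harmonicWeight 2) := by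
    simp only [hD, nonnegSlice, inner_harmonicWeight]
  subst hC' hD'
  have hw₁ := harmonicWeight_pos one_pos
  have hw₂ := harmonicWeight_pos two_pos
  have hCne : (nonnegSlice (harmonicWeight 1)).Nonempty := ⟨_, single_inv_mem_nonnegSlice (hw₁ 0)⟩
  have hDne : (nonnegSlice (harmonicWeight 2)).Nonempty := ⟨_, single_inv_mem_nonnegSlice (hw₂ 0)⟩
  have hnear := fun ε (hε : ε > 0) => exists_norm_sub_lt_harmonic hε
  refine ⟨disjoint_nonnegSlice fun k => ?_, hCne, hDne,
    not_isBounded_nonnegSlice hw₁, not_isBounded_nonnegSlice hw₂,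
    isClosed_nonnegSlice _, isClosed_nonnegSlice _, convex_nonnegSlice _, convex_nonnegSlice _,
    recessionCone_nonnegSlice hw₁ hCne, recessionCone_nonnegSlice hw₂ hDne,
    hnear, not_stronglySeparated_of_forall_exists_norm_sub_lt hnear⟩
  simp only [harmonicWeight_apply]
  gcongr
  norm_num
end
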